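/- arXiv:1412.8215 — 5 statements merged into one kernel-verified Lean document; each statement's English description precedes it below -/
import Mathlib

section
/- Let G be a connected graph of order n and A a nonnegative symmetric n×n matrix. Then there exists a Hamiltonian path P on the vertex set of G such that F_A(G) ≤ F_A(P), where F_A(H) = Σ_{1≤i<j≤n} d_H(i,j)·a_{i,j}. -/
open SimpleGraph Finset

/-- `F_A(G) = ∑_{i<j} d_G(i,j) · a_{i,j}`. -/
noncomputable def FA {n : ℕ} (A : Matrix (Fin n) (Fin n) ℝ) (G : SimpleGraph (Fin n)) : ℝ :=
  ∑ i : Fin n, ∑ j : Fin n, if i < j then (G.dist i j : ℝ) * A i j else 0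

/-- `G` is a path on its vertex set (isomorphic to the path graph). -/
def IsPathGraph {n : ℕ} (G : SimpleGraph (Fin n)) : Prop :=
  Nonempty (G ≃g SimpleGraph.pathGraph n)

/-- The distance matrix of `G`. -/
noncomputable def distMat {n : ℕ} (G : SimpleGraph (Fin n)) : Matrix (Fin n) (Fin n) ℝ :=
  fun i j => (G.dist i j : ℝ)

/-- The diagonal matrix of row sums of the distance matrix. -/
noncomputable def transMat {n : ℕ} (G : SimpleGraph (Fin n)) : Matrix (Fin n) (Fin n) ℝ :=
  Matrix.diagonal fun i => ∑ j : Fin n, (G.dist i j : ℝ)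

/-- Distance signless Laplacian `D^Q(G) = T(G) + D(G)`. -/
noncomputable def DQmat {n : ℕ} (G : SimpleGraph (Fin n)) : Matrix (Fin n) (Fin n) ℝ :=
  transMat G + distMat G

/-- Distance Laplacian `D^L(G) = T(G) - D(G)`. -/
noncomputable def DLmat {n : ℕ} (G : SimpleGraph (Fin n)) : Matrix (Fin n) (Fin n) ℝ :=
  transMat G - distMat G

/-- Largest eigenvalue of a matrix, as the supremum of its spectrum. -/
noncomputable def maxEig {n : ℕ} (M : Matrix (Fin n) (Fin n) ℝ) : ℝ :=
  sSup (spectrum ℝ M)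

/-!
Induct on the number of vertices. Delete a vertex `v` whose removal leaves `G` connected, pick a
neighbour `w` of `v`, and add the weights `a_{v,y}` to the entries `a_{w,y}`. Since
`d_G(v,y) ≤ 1 + d_{G-v}(w,y)`, this bounds `F_A(G)` by `F_{A'}(G - v) + ∑_y a_{v,y}`, and by
induction some path through `G - v` does at least as well for the new weights `A'`. Then attach `v`
at an end of that path. With `w` at position `t`, the part `∑_y |t - p(y)| a_{v,y}` of the cost of
the path is a convex function of `t`, hence at most its value at one of the two ends; reversing the
path if necessary, `v` goes next to that end, and pays that value plus `∑_y a_{v,y}`.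
-/

lemma convexOn_univ_sum {ι : Type*} (s : Finset ι) {f : ι → ℝ → ℝ}
    (hf : ∀ i ∈ s, ConvexOn ℝ Set.univ (f i)) :
    ConvexOn ℝ Set.univ fun t => ∑ i ∈ s, f i t := by
  induction s using Finset.cons_induction with
  | empty => simpa using convexOn_const (0 : ℝ) convex_univ
  | cons a s _ ih =>
    simp only [sum_cons]
    exact (hf a (mem_cons_self a s)).add (ih fun i hi => hf i (mem_cons_of_mem hi))

lemma sum_abs_sub_mul_le_max {ι : Type*} (s : Finset ι) (x c : ι → ℝ) {L t : ℝ}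
    (ht : t ∈ Set.Icc 0 L) (hx : ∀ i ∈ s, x i ∈ Set.Icc 0 L) (hc : ∀ i ∈ s, 0 ≤ c i) :
    ∑ i ∈ s, |t - x i| * c i ≤ max (∑ i ∈ s, x i * c i) (∑ i ∈ s, (L - x i) * c i) := by
  have hconv : ConvexOn ℝ Set.univ fun t => ∑ i ∈ s, |t - x i| * c i :=
    convexOn_univ_sum s fun i hi => by
      simpa [Real.dist_eq, mul_comm] using (convexOn_univ_dist (x i)).smul (hc i hi)
  have h0 : ∑ i ∈ s, |0 - x i| * c i = ∑ i ∈ s, x i * c i :=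
    sum_congr rfl fun i hi => by rw [zero_sub, abs_neg, abs_of_nonneg (hx i hi).1]
  have hL : ∑ i ∈ s, |L - x i| * c i = ∑ i ∈ s, (L - x i) * c i :=
    sum_congr rfl fun i hi => by rw [abs_of_nonneg (sub_nonneg.2 (hx i hi).2)]
  rw [← h0, ← hL]
  exact hconv.le_max_of_mem_Icc (Set.mem_univ 0) (Set.mem_univ L) ht

lemma sum_sum_ite_lt_eq_half {ι : Type*} [Fintype ι] [LinearOrder ι] (f : ι → ι → ℝ)
    (hf : ∀ i j, f i j = f j i) (hdiag : ∀ i, f i i = 0) :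
    ∑ i, ∑ j, (if i < j then f i j else 0) = (∑ i, ∑ j, f i j) / 2 := by
  have hsplit : ∀ i j, f i j = (if i < j then f i j else 0) + (if j < i then f j i else 0) := by
    intro i j
    rcases lt_trichotomy i j with h | rfl | h
    · simp [h, h.not_gt]
    · simp [hdiag]
    · simp [h, h.not_gt, hf i j]
  conv_rhs => rw [sum_congr rfl fun i _ => sum_congr rfl fun j _ => hsplit i j]
  simp only [sum_add_distrib]
  rw [sum_comm (f := fun i j => if j < i then f j i else 0)]
  ring

lemma sum_sum_eq_sum_sum_compl_singleton {V : Type*} [Fintype V] [DecidableEq V] (v : V)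
    (f : V → V → ℝ) (hf : f v v = 0) :
    ∑ x, ∑ y, f x y = ∑ x : ({v}ᶜ : Set V), ∑ y : ({v}ᶜ : Set V), f x y +
      ∑ y : ({v}ᶜ : Set V), (f v y + f y v) := by
  have hsplit : ∀ g : V → ℝ, ∑ x, g x = g v + ∑ x : ({v}ᶜ : Set V), g x := fun g =>
    ((Equiv.optionSubtypeNe v).sum_comp g).symm.trans (Fintype.sum_option _)
  rw [hsplit, hsplit, hf]
  simp_rw [hsplit (f _), sum_add_distrib]
  ring

section addRowCol

variable {W : Type*} [DecidableEq W]

def addRowCol (A : W → W → ℝ) (w : W) (b : W → ℝ) : W → W → ℝ :=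
  fun x y => A x y + (if x = w then b y else 0) + (if y = w then b x else 0)

lemma addRowCol_comm {A : W → W → ℝ} (hA : ∀ x y, A x y = A y x) (w : W) (b : W → ℝ)
    (x y : W) : addRowCol A w b x y = addRowCol A w b y x := by
  simp only [addRowCol, hA x y]
  ring

lemma addRowCol_nonneg {A : W → W → ℝ} (hA : ∀ x y, 0 ≤ A x y) (w : W) {b : W → ℝ}
    (hb : ∀ y, 0 ≤ b y) (x y : W) : 0 ≤ addRowCol A w b x y := by
  unfold addRowCol
  have := hA x y
  split_ifs <;> linarith [hb x, hb y]

lemma sum_sum_mul_addRowCol [Fintype W] (D A : W → W → ℝ) (hD : ∀ x y, D x y = D y x) (w : W)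
    (b : W → ℝ) :
    ∑ x, ∑ y, D x y * addRowCol A w b x y = ∑ x, ∑ y, D x y * A x y + 2 * ∑ y, D w y * b y := by
  simp only [addRowCol, mul_add, mul_ite, mul_zero, sum_add_distrib, sum_ite_irrel,
    sum_const_zero, sum_ite_eq', mem_univ, if_true, hD _ w]
  ring

end addRowCol

namespace SimpleGraph

variable {V W : Type*} {G : SimpleGraph V} {H : SimpleGraph W}

lemma Hom.dist_map_le (f : G →g H) {u v : V} (h : G.Reachable u v) :
    H.dist (f u) (f v) ≤ G.dist u v := by
  obtain ⟨p, hp⟩ := h.exists_walk_length_eq_dist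
  exact (dist_le (p.map f)).trans_eq ((p.length_map f).trans hp)

lemma Iso.dist_map (f : G ≃g H) (u v : V) : H.dist (f u) (f v) = G.dist u v := by
  by_cases h : G.Reachable u v
  · refine le_antisymm (f.toHom.dist_map_le h) ?_
    simpa using f.symm.toHom.dist_map_le (h.map f.toHom)
  · rw [dist_eq_zero_of_not_reachable h, dist_eq_zero_of_not_reachable]
    exact fun h' => h (by simpa using h'.map f.symm.toHom)

lemma dist_le_dist_induce {s : Set V} {u v : s} (h : (G.induce s).Reachable u v) :
    G.dist u v ≤ (G.induce s).dist u v :=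
  (Embedding.induce s).toHom.dist_map_le h

lemma pathGraph_abs_sub_le_length {n : ℕ} {p q : Fin n} (w : (pathGraph n).Walk p q) :
    |(p : ℤ) - q| ≤ w.length := by
  induction w with
  | nil => simp
  | @cons p c q hadj w ih =>
    rw [Walk.length_cons, abs_le] at *
    rcases pathGraph_adj.mp hadj with h | h <;> omega

lemma pathGraph_dist_le {n : ℕ} (p : Fin n) :
    ∀ (k : ℕ) (q : Fin n), (q : ℕ) = p + k → (pathGraph n).dist p q ≤ k
  | 0, q, hq => by simp [Fin.ext hq.symm]
  | k + 1, q, hq => by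
    let r : Fin n := ⟨p + k, by omega⟩
    have hadj : (pathGraph n).Adj r q := pathGraph_adj.mpr (Or.inl hq.symm)
    have := hadj.reachable.dist_triangle_right p
    have := pathGraph_dist_le p k r rfl
    rw [dist_eq_one_iff_adj.mpr hadj] at *
    omega

lemma pathGraph_dist {n : ℕ} (p q : Fin n) : ((pathGraph n).dist p q : ℤ) = |(p : ℤ) - q| := by
  obtain ⟨w, hw⟩ := (pathGraph_preconnected n p q).exists_walk_length_eq_dist
  refine le_antisymm ?_ (hw ▸ pathGraph_abs_sub_le_length w)
  rcases le_total p q with h | h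
  · have := pathGraph_dist_le p (q - p) q (by omega)
    rw [abs_sub_comm]
    exact le_abs.mpr (Or.inl (by omega))
  · have := pathGraph_dist_le q (p - q) p (by omega)
    rw [dist_comm]
    exact le_abs.mpr (Or.inl (by omega))

end SimpleGraph

section Layout

variable {V : Type*} [Fintype V]

noncomputable def distSum (G : SimpleGraph V) (A : V → V → ℝ) : ℝ :=
  ∑ x, ∑ y, (G.dist x y : ℝ) * A x y

def layoutSum {m : ℕ} (σ : V ≃ Fin m) (A : V → V → ℝ) : ℝ :=
  ∑ x, ∑ y, |(σ x : ℝ) - σ y| * A x y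

lemma distSum_comap_pathGraph {m : ℕ} (σ : V ≃ Fin m) (A : V → V → ℝ) :
    distSum ((pathGraph m).comap σ) A = layoutSum σ A := by
  refine sum_congr rfl fun x _ => sum_congr rfl fun y _ => ?_
  have h := congrArg ((↑) : ℤ → ℝ) (pathGraph_dist (σ x) (σ y))
  push_cast at h
  rw [← (Iso.comap σ (pathGraph m)).dist_map, Iso.comap_apply, Iso.comap_apply, h]

lemma layoutSum_addRowCol [DecidableEq V] {m : ℕ} (σ : V ≃ Fin m) (A : V → V → ℝ) (w : V)
    (b : V → ℝ) :
    layoutSum σ (addRowCol A w b) = layoutSum σ A + 2 * ∑ y, |(σ w : ℝ) - σ y| * b y :=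
  sum_sum_mul_addRowCol _ A (fun _ _ => abs_sub_comm _ _) w b

lemma exists_layout_sum_abs_sub_le {m : ℕ} (σ : V ≃ Fin m) (t : Fin m) (c : V → ℝ)
    (hc : ∀ y, 0 ≤ c y) :
    ∃ τ : V ≃ Fin m, (∀ x y, |(τ x : ℝ) - τ y| = |(σ x : ℝ) - σ y|) ∧
      ∑ y, |(t : ℝ) - σ y| * c y ≤ ∑ y, (τ y : ℝ) * c y := by
  have hrev : ∀ i : Fin m, (i.rev : ℝ) = m - 1 - i := fun i => by
    rw [Fin.val_rev, Nat.cast_sub (by omega)]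
    push_cast
    ring
  have hpos : ∀ i : Fin m, (i : ℝ) ∈ Set.Icc 0 ((m : ℝ) - 1) := fun i =>
    ⟨by positivity, by linarith [hrev i, (i.rev.val.cast_nonneg : (0 : ℝ) ≤ _)]⟩
  rcases le_max_iff.mp (sum_abs_sub_mul_le_max univ (fun y => (σ y : ℝ)) c (hpos t)
    (fun y _ => hpos (σ y)) fun y _ => hc y) with h | h
  · exact ⟨σ, fun _ _ => rfl, h⟩
  · refine ⟨σ.trans Fin.revPerm, fun x y => ?_, h.trans_eq (sum_congr rfl fun y _ => ?_)⟩
    · simp only [Equiv.trans_apply, Fin.revPerm_apply, hrev]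
      rw [← abs_neg]
      ring_nf
    · simp only [Equiv.trans_apply, Fin.revPerm_apply, hrev]

end Layout

section consLayout

variable {V : Type*} [DecidableEq V] {m : ℕ}

def consLayout (v : V) (σ : ({v}ᶜ : Set V) ≃ Fin m) : V ≃ Fin (m + 1) :=
  (Equiv.optionSubtypeNe v).symm.trans
    (((Equiv.subtypeEquivRight fun _ => Set.mem_compl_singleton_iff.symm).trans σ).optionCongr.trans
      (finSuccEquiv m).symm)

@[simp] lemma consLayout_self (v : V) (σ : ({v}ᶜ : Set V) ≃ Fin m) : consLayout v σ v = 0 := by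
  simp [consLayout]

@[simp] lemma consLayout_coe (v : V) (σ : ({v}ᶜ : Set V) ≃ Fin m) (x : ({v}ᶜ : Set V)) :
    consLayout v σ x = (σ x).succ := by
  simp [consLayout, Equiv.optionSubtypeNe_symm_of_ne x.2, Equiv.subtypeEquivRight_apply]

lemma layoutSum_consLayout [Fintype V] (v : V) (σ : ({v}ᶜ : Set V) ≃ Fin m) {A : V → V → ℝ}
    (hA : ∀ x y, A x y = A y x) :
    layoutSum (consLayout v σ) A =
      layoutSum σ (fun x y => A x y) + 2 * ∑ y, ((σ y : ℝ) + 1) * A v y := by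
  rw [layoutSum, sum_sum_eq_sum_sum_compl_singleton v _ (by simp)]
  simp only [consLayout_coe, consLayout_self, Fin.val_succ, Fin.val_zero]
  push_cast
  simp only [add_sub_add_right_eq_sub, zero_sub, abs_neg, sub_zero, hA _ v, ← two_mul, mul_sum]
  rw [layoutSum]
  congr 1
  refine sum_congr rfl fun y _ => ?_
  rw [abs_of_nonneg (by positivity)]

end consLayout

lemma distSum_le_distSum_induce_compl {V : Type*} [Fintype V] [DecidableEq V]
    {G : SimpleGraph V} {v : V} (hG : (G.induce {v}ᶜ).Connected) {w : ({v}ᶜ : Set V)} (hvw : G.Adj v w) {A : V → V → ℝ}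
    (hA : ∀ x y, A x y = A y x) (hA0 : ∀ x y, 0 ≤ A x y) :
    distSum G A ≤ distSum (G.induce {v}ᶜ) (addRowCol (fun x y => A x y) w (A v ·)) +
      2 * ∑ y : ({v}ᶜ : Set V), A v y := by
  rw [distSum, sum_sum_eq_sum_sum_compl_singleton v _ (by simp), distSum,
    sum_sum_mul_addRowCol _ _ (fun _ _ => by rw [dist_comm])]
  have hinner : ∑ x : ({v}ᶜ : Set V), ∑ y : ({v}ᶜ : Set V), (G.dist x y : ℝ) * A x y ≤
      ∑ x, ∑ y, ((G.induce {v}ᶜ).dist x y : ℝ) * A x y :=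
    sum_le_sum fun x _ => sum_le_sum fun y _ => mul_le_mul_of_nonneg_right
      (by exact_mod_cast dist_le_dist_induce (hG.preconnected x y)) (hA0 x y)
  have hv : ∑ y : ({v}ᶜ : Set V), ((G.dist v y : ℝ) * A v y + (G.dist y v : ℝ) * A y v) ≤
      2 * ∑ y, ((G.induce {v}ᶜ).dist w y : ℝ) * A v y + 2 * ∑ y : ({v}ᶜ : Set V), A v y := by
    rw [mul_sum, mul_sum, ← sum_add_distrib]
    refine sum_le_sum fun y _ => ?_
    have hdist : (G.dist v y : ℝ) ≤ 1 + (G.induce {v}ᶜ).dist w y := by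
      have := hvw.reachable.dist_triangle_left y
      have := dist_le_dist_induce (hG.preconnected w y)
      rw [dist_eq_one_iff_adj.mpr hvw] at *
      exact_mod_cast (by omega)
    rw [dist_comm (u := (y : V)), hA y v]
    nlinarith [hA0 v y]
  linarith

theorem exists_distSum_le_layoutSum {m : ℕ} {V : Type*} [Fintype V] [DecidableEq V]
    (hV : Fintype.card V = m) (G : SimpleGraph V) (hG : G.Connected) {A : V → V → ℝ}
    (hA : ∀ x y, A x y = A y x) (hA0 : ∀ x y, 0 ≤ A x y) :
    ∃ σ : V ≃ Fin m, distSum G A ≤ layoutSum σ A := by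
  induction m generalizing V with
  | zero => exact ((Fintype.card_eq_zero_iff.mp hV).false hG.nonempty.some).elim
  | succ m ih =>
    rcases subsingleton_or_nontrivial V with _ | _
    · refine ⟨Fintype.equivFinOfCardEq hV, le_of_eq <| sum_congr rfl fun x _ =>
        sum_congr rfl fun y _ => ?_⟩
      simp [Subsingleton.elim x y]
    obtain ⟨v, hGv⟩ := hG.exists_connected_induce_compl_singleton_of_finite_nontrivial
    obtain ⟨w, hvw⟩ := hG.preconnected.exists_adj_of_nontrivial v
    let w' : ({v}ᶜ : Set V) := ⟨w, (G.ne_of_adj hvw).symm⟩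
    let A' := addRowCol (fun x y : ({v}ᶜ : Set V) => A x y) w' (A v ·)
    have hcard : Fintype.card ({v}ᶜ : Set V) = m := by simp [Finset.filter_ne', hV]
    obtain ⟨σ, hσ⟩ := ih hcard (G.induce {v}ᶜ) hGv (A := A')
      (addRowCol_comm (fun x y : ({v}ᶜ : Set V) => hA x y) w' _)
      (addRowCol_nonneg (fun x y : ({v}ᶜ : Set V) => hA0 x y) w' (hA0 v ·))
    obtain ⟨τ, hτσ, hτ⟩ := exists_layout_sum_abs_sub_le σ (σ w') (A v ·) (hA0 v ·)
    refine ⟨consLayout v τ, ?_⟩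
    calc distSum G A ≤ distSum (G.induce {v}ᶜ) A' + 2 * ∑ y : ({v}ᶜ : Set V), A v y :=
          distSum_le_distSum_induce_compl hGv (w := w') hvw hA hA0
      _ ≤ layoutSum σ A' + 2 * ∑ y : ({v}ᶜ : Set V), A v y := by gcongr
      _ = layoutSum τ (fun x y => A x y) + 2 * ∑ y, |(σ w' : ℝ) - σ y| * A v y +
            2 * ∑ y : ({v}ᶜ : Set V), A v y := by
          rw [layoutSum_addRowCol]
          simp only [layoutSum, hτσ]
      _ ≤ layoutSum τ (fun x y => A x y) + 2 * ∑ y, (τ y : ℝ) * A v y +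
            2 * ∑ y : ({v}ᶜ : Set V), A v y := by gcongr
      _ = layoutSum (consLayout v τ) A := by
          simp only [layoutSum_consLayout v τ hA, add_mul, one_mul, sum_add_distrib]
          ring

lemma FA_eq_distSum_div_two {n : ℕ} {A : Matrix (Fin n) (Fin n) ℝ} (hA : A.IsSymm)
    (G : SimpleGraph (Fin n)) : FA A G = distSum G A / 2 :=
  sum_sum_ite_lt_eq_half _ (fun i j => by rw [dist_comm, hA.apply]) (by simp)

theorem stmt_2 {n : ℕ} (G : SimpleGraph (Fin n)) (hG : G.Connected)
    (A : Matrix (Fin n) (Fin n) ℝ) (hsymm : A.IsSymm) (hnn : ∀ i j, 0 ≤ A i j) :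
    ∃ P : SimpleGraph (Fin n), IsPathGraph P ∧ FA A G ≤ FA A P := by
  obtain ⟨σ, hσ⟩ := exists_distSum_le_layoutSum (Fintype.card_fin n) G hG
    (fun i j => (hsymm.apply i j).symm) hnn
  refine ⟨(pathGraph n).comap σ, ⟨Iso.comap σ _⟩, ?_⟩
  rw [FA_eq_distSum_div_two hsymm, FA_eq_distSum_div_two hsymm]
  linarith [distSum_comap_pathGraph σ A]
end

section
/- Let G be a connected graph of order n that is not a path, and let A be a nonnegative symmetric n×n matrix such that each row of A has at most one zero off-diagonal entry. Then there exists a path P on the vertex set of G with F_A(G) < F_A(P). -/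
open SimpleGraph Finset

section Helpers
variable {V : Type*} {G : SimpleGraph V}

/-- Lower bound on walk length via a 1-Lipschitz potential. -/
lemma lipschitz_le_length (val : V → ℕ)
    (hlip : ∀ x y, G.Adj x y → val x ≤ val y + 1) {t : V} (ht : val t = 0) :
    ∀ {x : V} (w : G.Walk x t), val x ≤ w.length := by
  intro x w
  induction w with
  | nil => simp [ht]
  | cons h w ih => simpa using (hlip _ _ h).trans (by omega)

lemma lipschitz_le_dist (val : V → ℕ)
    (hlip : ∀ x y, G.Adj x y → val x ≤ val y + 1) {t : V} (ht : val t = 0)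
    {x : V} (hr : G.Reachable x t) : val x ≤ G.dist x t := by
  obtain ⟨w, hw⟩ := hr.exists_walk_length_eq_dist
  simpa [hw] using lipschitz_le_length val hlip ht w

lemma dist_mono {H : SimpleGraph V} (hle : H ≤ G) (hH : H.Connected) (x y : V) :
    G.dist x y ≤ H.dist x y := by
  obtain ⟨w, hw⟩ := (hH x y).exists_walk_length_eq_dist
  simpa [hw] using SimpleGraph.dist_le (w.mapLe hle)

lemma exists_path_dist [DecidableEq V] {x y : V} (h : G.Reachable x y) :
    ∃ w : G.Walk x y, w.IsPath ∧ w.length = G.dist x y := by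
  obtain ⟨w, hw⟩ := h.exists_walk_length_eq_dist
  refine ⟨w.bypass, w.bypass_isPath, le_antisymm ?_ (SimpleGraph.dist_le _)⟩
  exact le_trans w.length_bypass_le (le_of_eq hw)

lemma exists_adj_closer (hc : G.Connected) {x z : V} (hxz : x ≠ z) :
    ∃ y, G.Adj x y ∧ G.dist y z + 1 = G.dist x z := by
  obtain ⟨w, hw⟩ := (hc x z).exists_walk_length_eq_dist
  cases w with
  | nil => exact absurd rfl hxz
  | @cons _ y _ h w =>
    refine ⟨y, h, le_antisymm ?_ ?_⟩
    · have h1 : G.dist y z ≤ w.length := SimpleGraph.dist_le w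
      simp only [SimpleGraph.Walk.length_cons] at hw
      omega
    · obtain ⟨w2, hw2⟩ := (hc y z).exists_walk_length_eq_dist
      have := SimpleGraph.dist_le (SimpleGraph.Walk.cons h w2)
      simp only [SimpleGraph.Walk.length_cons, hw2] at this
      omega

lemma adj_dist_le_one {x y : V} (h : G.Adj x y) : G.dist x y ≤ 1 :=
  le_trans (SimpleGraph.dist_le (SimpleGraph.Walk.cons h SimpleGraph.Walk.nil)) (by simp)

/-- In a tree, distances to a fixed vertex differ across an edge. -/
lemma adj_dist_ne [DecidableEq V] (hc : G.Connected) (ha : G.IsAcyclic) {p q : V}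
    (h : G.Adj p q) (z : V) : G.dist z p ≠ G.dist z q := by
  intro heq
  obtain ⟨w1, hp1, hl1⟩ := exists_path_dist (hc z p)
  obtain ⟨w2, hp2, hl2⟩ := exists_path_dist (hc z q)
  have hpns : p ∉ w2.support := by
    intro hmem
    have h1 : G.dist z p ≤ (w2.takeUntil p hmem).length := SimpleGraph.dist_le _
    have h2 : G.dist p q ≤ (w2.dropUntil p hmem).length := SimpleGraph.dist_le _
    have h3 : (w2.takeUntil p hmem).length + (w2.dropUntil p hmem).length = w2.length := by
      rw [← SimpleGraph.Walk.length_append, SimpleGraph.Walk.take_spec]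
    have hdpq : G.dist p q = 1 := by
      have := adj_dist_le_one h
      have h0 := hc.pos_dist_of_ne h.ne
      omega
    omega
  have hw3 : ((SimpleGraph.Walk.cons h w2.reverse).reverse).IsPath := by
    apply SimpleGraph.Walk.IsPath.reverse
    apply hp2.reverse.cons
    simpa using hpns
  have := SimpleGraph.isAcyclic_iff_path_unique.mp ha ⟨w1, hp1⟩
    ⟨(SimpleGraph.Walk.cons h w2.reverse).reverse, hw3⟩
  have hlen : w1.length = ((SimpleGraph.Walk.cons h w2.reverse).reverse).length := by
    rw [Subtype.ext_iff] at this
    simp only at this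
    rw [this]
  simp only [SimpleGraph.Walk.length_reverse, SimpleGraph.Walk.length_cons] at hlen
  omega

/-- In a tree, adjacent vertices have distance exactly one apart. -/
lemma adj_dist_cases [DecidableEq V] (hc : G.Connected) (ha : G.IsAcyclic) {p q : V}
    (h : G.Adj p q) (z : V) :
    G.dist z p + 1 = G.dist z q ∨ G.dist z q + 1 = G.dist z p := by
  have h1 : G.dist z q ≤ G.dist z p + 1 := by
    have := hc.dist_triangle (u := z) (v := p) (w := q)
    have := adj_dist_le_one h
    omega
  have h2 : G.dist z p ≤ G.dist z q + 1 := by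
    have := hc.dist_triangle (u := z) (v := q) (w := p)
    have := adj_dist_le_one h.symm
    omega
  have := adj_dist_ne hc ha h z
  omega

/-- In a tree, the neighbor on a geodesic is unique. -/
lemma closer_unique [DecidableEq V] (hc : G.Connected) (ha : G.IsAcyclic) {p z y y' : V}
    (hy : G.Adj p y) (hy' : G.Adj p y')
    (h1 : G.dist y z + 1 = G.dist p z) (h2 : G.dist y' z + 1 = G.dist p z) : y = y' := by
  have key : ∀ y0 : V, G.Adj p y0 → G.dist y0 z + 1 = G.dist p z →
      ∃ (w : G.Walk p z), w.IsPath ∧ w.length = G.dist p z ∧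
        w.support.tail.head? = some y0 := by
    intro y0 hadj hd
    obtain ⟨w0, hp0, hl0⟩ := exists_path_dist (hc y0 z)
    have hpns : p ∉ w0.support := by
      intro hmem
      have ha1 : G.dist y0 p ≤ (w0.takeUntil p hmem).length := SimpleGraph.dist_le _
      have ha2 : (w0.takeUntil p hmem).length + (w0.dropUntil p hmem).length = w0.length := by
        rw [← SimpleGraph.Walk.length_append, SimpleGraph.Walk.take_spec]
      have ha3 : G.dist p z ≤ (w0.dropUntil p hmem).length := SimpleGraph.dist_le _
      have ha4 : G.dist y0 p = 1 := by
        have := adj_dist_le_one hadj.symm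
        have h0 := hc.pos_dist_of_ne hadj.ne.symm
        omega
      omega
    refine ⟨SimpleGraph.Walk.cons hadj w0, hp0.cons hpns, ?_, ?_⟩
    · simp [hl0]; omega
    · simp [SimpleGraph.Walk.support_cons]
      cases w0 <;> simp [SimpleGraph.Walk.support_cons]
  obtain ⟨w1, hp1, hl1, hh1⟩ := key y hy h1
  obtain ⟨w2, hp2, hl2, hh2⟩ := key y' hy' h2
  have := SimpleGraph.isAcyclic_iff_path_unique.mp ha ⟨w1, hp1⟩ ⟨w2, hp2⟩
  rw [Subtype.ext_iff] at this
  simp only at this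
  rw [this] at hh1
  rw [hh1] at hh2
  exact Option.some_injective _ hh2

end Helpers

variable {n : ℕ}

/-- The path graph on `Fin n` whose `t`-th vertex is `σ⁻¹ t`. -/
def pathOf (σ : Equiv.Perm (Fin n)) : SimpleGraph (Fin n) where
  Adj x y := Nat.dist (σ x).1 (σ y).1 = 1
  symm := by constructor; intro x y h; rwa [Nat.dist_comm] at h
  loopless := by constructor; intro x; simp [Nat.dist_self]

lemma pathOf_adj {σ : Equiv.Perm (Fin n)} {x y : Fin n} :
    (pathOf σ).Adj x y ↔ Nat.dist (σ x).1 (σ y).1 = 1 := Iff.rfl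

lemma isPathGraph_pathOf (σ : Equiv.Perm (Fin n)) : IsPathGraph (pathOf σ) := by
  refine ⟨⟨σ, ?_⟩⟩
  intro a b
  rw [pathGraph_adj]
  show _ ↔ Nat.dist (σ a).1 (σ b).1 = 1
  simp only [Nat.dist]
  omega

/-- Walk along `pathOf σ` between consecutive position values. -/
lemma pathOf_walk (σ : Equiv.Perm (Fin n)) :
    ∀ (d : ℕ) (a b : Fin n), a.1 + d = b.1 →
      ∃ w : (pathOf σ).Walk (σ.symm a) (σ.symm b), w.length = d := by
  intro d
  induction d with
  | zero =>
    intro a b hab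
    have : a = b := Fin.ext (by omega)
    subst this
    exact ⟨SimpleGraph.Walk.nil, rfl⟩
  | succ d ih =>
    intro a b hab
    have ha1 : a.1 + 1 < n := by omega
    obtain ⟨w, hw⟩ := ih ⟨a.1 + 1, ha1⟩ b (show a.1 + 1 + d = b.1 by omega)
    refine ⟨SimpleGraph.Walk.cons ?_ w, by rw [SimpleGraph.Walk.length_cons, hw]⟩
    show Nat.dist (σ (σ.symm a)).1 (σ (σ.symm ⟨a.1 + 1, ha1⟩)).1 = 1
    rw [Equiv.apply_symm_apply, Equiv.apply_symm_apply]
    show Nat.dist a.1 (a.1 + 1) = 1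
    simp only [Nat.dist]
    omega

lemma pathOf_reach (σ : Equiv.Perm (Fin n)) (x y : Fin n) :
    ∃ w : (pathOf σ).Walk x y, w.length = Nat.dist (σ x).1 (σ y).1 := by
  have e1 : σ.symm (σ x) = x := Equiv.symm_apply_apply σ x
  have e2 : σ.symm (σ y) = y := Equiv.symm_apply_apply σ y
  rcases le_total (σ x).1 (σ y).1 with h | h
  · obtain ⟨w, hw⟩ := pathOf_walk σ (Nat.dist (σ x).1 (σ y).1) (σ x) (σ y)
      (by simp only [Nat.dist]; omega)
    exact ⟨(w.copy e1 e2), by simpa using hw⟩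
  · obtain ⟨w, hw⟩ := pathOf_walk σ (Nat.dist (σ x).1 (σ y).1) (σ y) (σ x)
      (by simp only [Nat.dist]; omega)
    exact ⟨(w.copy e2 e1).reverse, by simpa using hw⟩

lemma pathOf_connected (hn : 0 < n) (σ : Equiv.Perm (Fin n)) : (pathOf σ).Connected := by
  rw [connected_iff]
  refine ⟨fun x y => ?_, ⟨⟨0, hn⟩⟩⟩
  obtain ⟨w, -⟩ := pathOf_reach σ x y
  exact ⟨w⟩

lemma pathOf_dist (σ : Equiv.Perm (Fin n)) (x y : Fin n) :
    (pathOf σ).dist x y = Nat.dist (σ x).1 (σ y).1 := by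
  refine le_antisymm ?_ ?_
  · obtain ⟨w, hw⟩ := pathOf_reach σ x y
    simpa [hw] using SimpleGraph.dist_le w
  · refine lipschitz_le_dist (fun z => Nat.dist (σ z).1 (σ y).1) ?_ (by simp [Nat.dist_self]) ?_
    · intro u v huv
      have htri : Nat.dist (σ u).1 (σ y).1 ≤ Nat.dist (σ u).1 (σ v).1 + Nat.dist (σ v).1 (σ y).1 :=
        Nat.dist.triangle_inequality _ _ _
      rw [pathOf_adj] at huv
      show Nat.dist (σ u).1 (σ y).1 ≤ Nat.dist (σ v).1 (σ y).1 + 1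
      omega
    · obtain ⟨w, -⟩ := pathOf_reach σ x y
      exact ⟨w⟩

section FAlemmas
variable {n : ℕ} (A : Matrix (Fin n) (Fin n) ℝ)

lemma FA_eq_half (hsymm : A.IsSymm) (G : SimpleGraph (Fin n)) :
    FA A G = (∑ i : Fin n, ∑ j : Fin n, (G.dist i j : ℝ) * A i j) / 2 := by
  have key : (∑ i : Fin n, ∑ j : Fin n, (G.dist i j : ℝ) * A i j) = 2 * FA A G := by
    have h1 : ∀ i j : Fin n, (G.dist i j : ℝ) * A i j =
        (if i < j then (G.dist i j : ℝ) * A i j else 0) +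
        (if j < i then (G.dist i j : ℝ) * A i j else 0) := by
      intro i j
      rcases lt_trichotomy i j with h | h | h
      · simp [h, not_lt.mpr h.le]
      · subst h; simp
      · simp [h, not_lt.mpr h.le]
    calc (∑ i : Fin n, ∑ j : Fin n, (G.dist i j : ℝ) * A i j)
        = (∑ i : Fin n, ∑ j : Fin n, (if i < j then (G.dist i j : ℝ) * A i j else 0)) +
          (∑ i : Fin n, ∑ j : Fin n, (if j < i then (G.dist i j : ℝ) * A i j else 0)) := by
          rw [← Finset.sum_add_distrib]
          refine Finset.sum_congr rfl fun i _ => ?_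
          rw [← Finset.sum_add_distrib]
          exact Finset.sum_congr rfl fun j _ => h1 i j
      _ = FA A G + FA A G := by
          congr 1
          rw [Finset.sum_comm]
          refine Finset.sum_congr rfl fun j _ => Finset.sum_congr rfl fun i _ => ?_
          rw [SimpleGraph.dist_comm, hsymm.apply]
      _ = 2 * FA A G := by ring
  rw [key]; ring

lemma FA_mono (hnn : ∀ i j, 0 ≤ A i j) {G H : SimpleGraph (Fin n)}
    (hd : ∀ i j, G.dist i j ≤ H.dist i j) : FA A G ≤ FA A H := by
  refine Finset.sum_le_sum fun i _ => Finset.sum_le_sum fun j _ => ?_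
  split
  · exact mul_le_mul_of_nonneg_right (by exact_mod_cast hd i j) (hnn i j)
  · exact le_rfl

lemma FA_strict (hsymm : A.IsSymm) (hnn : ∀ i j, 0 ≤ A i j) {G H : SimpleGraph (Fin n)}
    (hd : ∀ i j, G.dist i j ≤ H.dist i j) {x y : Fin n} (hne : x ≠ y)
    (hlt : G.dist x y < H.dist x y) (hA : 0 < A x y) : FA A G < FA A H := by
  have main : ∀ x y : Fin n, x < y → G.dist x y < H.dist x y → 0 < A x y → FA A G < FA A H := by
    intro x y hxy hlt hA
    refine Finset.sum_lt_sum (fun i _ => Finset.sum_le_sum fun j _ => ?_) ⟨x, Finset.mem_univ x, ?_⟩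
    · split
      · exact mul_le_mul_of_nonneg_right (by exact_mod_cast hd i j) (hnn i j)
      · exact le_rfl
    · refine Finset.sum_lt_sum (fun j _ => ?_) ⟨y, Finset.mem_univ y, ?_⟩
      · split
        · exact mul_le_mul_of_nonneg_right (by exact_mod_cast hd x j) (hnn x j)
        · exact le_rfl
      · simp only [if_pos hxy]
        exact mul_lt_mul_of_pos_right (by exact_mod_cast hlt) hA
  rcases lt_or_gt_of_ne hne with h | h
  · exact main x y h hlt hA
  · refine main y x h ?_ ?_
    · have e1 : G.dist y x = G.dist x y := SimpleGraph.dist_comm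
      have e2 : H.dist y x = H.dist x y := SimpleGraph.dist_comm
      rw [e1, e2]; exact hlt
    · rw [hsymm.apply x y]; exact hA

lemma exists_max_FA (hn : 0 < n) :
    ∃ Hm : SimpleGraph (Fin n), Hm.Connected ∧ ∀ H', H'.Connected → FA A H' ≤ FA A Hm := by
  classical
  have hne : (Finset.univ.filter (fun H : SimpleGraph (Fin n) => H.Connected)).Nonempty := by
    refine ⟨⊤, ?_⟩
    simp only [Finset.mem_filter, Finset.mem_univ, true_and]
    rw [connected_iff]
    exact ⟨fun x y => by
      by_cases h : x = y
      · subst h; rfl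
      · exact SimpleGraph.Adj.reachable (by simp [h]), ⟨⟨0, hn⟩⟩⟩
  obtain ⟨Hm, hmem, hmax⟩ := Finset.exists_max_image _ (FA A) hne
  simp only [Finset.mem_filter, Finset.mem_univ, true_and] at hmem
  exact ⟨Hm, hmem, fun H' h' => hmax H' (by simp [h'])⟩

lemma delete_edge_step {H : SimpleGraph (Fin n)} (hc : H.Connected) (hnac : ¬ H.IsAcyclic) :
    ∃ H' : SimpleGraph (Fin n), H'.Connected ∧ H' ≤ H ∧
      H'.edgeSet.ncard < H.edgeSet.ncard ∧ ∀ i j, H.dist i j ≤ H'.dist i j := by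
  classical
  rw [SimpleGraph.IsAcyclic] at hnac
  push_neg at hnac
  obtain ⟨v, c, hcyc⟩ := hnac
  obtain ⟨x, y, hxy, hmem⟩ : ∃ x y, H.Adj x y ∧ s(x, y) ∈ c.edges := by
    cases c with
    | nil => exact absurd rfl hcyc.ne_nil
    | @cons _ b _ h w => exact ⟨v, b, h, by simp⟩
  have hnb : ¬ H.IsBridge s(x, y) := by
    rw [SimpleGraph.isBridge_iff_adj_and_forall_cycle_notMem]
    push_neg
    exact ⟨v, c, hcyc, hmem⟩
    exact hxy
  rw [SimpleGraph.isBridge_iff] at hnb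
  push_neg at hnb
  have hreach : (H \ SimpleGraph.fromEdgeSet {s(x, y)}).Reachable x y := hnb
  set H' := H \ SimpleGraph.fromEdgeSet {s(x, y)} with hH'
  have hle : H' ≤ H := sdiff_le
  have hkey : ∀ u w, H.Reachable u w → H'.Reachable u w := by
    intro u w hr
    obtain ⟨p⟩ := hr
    induction p with
    | nil => rfl
    | @cons a b d hadj p ih =>
      refine SimpleGraph.Reachable.trans ?_ ih
      by_cases he : s(a, b) = s(x, y)
      · rw [Sym2.eq_iff] at he
        rcases he with ⟨rfl, rfl⟩ | ⟨rfl, rfl⟩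
        · exact hreach
        · exact hreach.symm
      · refine SimpleGraph.Adj.reachable ?_
        rw [hH', SimpleGraph.sdiff_adj]
        refine ⟨hadj, ?_⟩
        rw [SimpleGraph.fromEdgeSet_adj]
        rintro ⟨hmm, -⟩
        exact he (Set.mem_singleton_iff.mp hmm)
  have hconn' : H'.Connected := by
    rw [connected_iff]
    exact ⟨fun u w => hkey u w (hc u w), hc.nonempty⟩
  refine ⟨H', hconn', hle, ?_, fun i j => dist_mono hle hconn' i j⟩
  have hnotadj : ¬ H'.Adj x y := by
    rw [hH', SimpleGraph.sdiff_adj]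
    rintro ⟨-, hbad⟩
    exact hbad (by rw [SimpleGraph.fromEdgeSet_adj]; exact ⟨rfl, hxy.ne⟩)
  refine Set.ncard_lt_ncard ?_ (Set.toFinite _)
  rw [Set.ssubset_iff_subset_ne]
  refine ⟨SimpleGraph.edgeSet_subset_edgeSet.mpr hle, ?_⟩
  intro heq
  have : s(x, y) ∈ H'.edgeSet := by rw [heq]; exact (SimpleGraph.mem_edgeSet H).mpr hxy
  exact hnotadj ((SimpleGraph.mem_edgeSet H').mp this)

lemma exists_acyclic_le (H : SimpleGraph (Fin n)) (hc : H.Connected) :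
    ∃ T, T ≤ H ∧ T.Connected ∧ T.IsAcyclic ∧ ∀ i j, H.dist i j ≤ T.dist i j := by
  classical
  suffices key : ∀ (m : ℕ) (H : SimpleGraph (Fin n)), H.edgeSet.ncard ≤ m → H.Connected →
      ∃ T, T ≤ H ∧ T.Connected ∧ T.IsAcyclic ∧ ∀ i j, H.dist i j ≤ T.dist i j by
    exact key H.edgeSet.ncard H le_rfl hc
  intro m
  induction m with
  | zero =>
    intro H hcard hc
    by_cases hac : H.IsAcyclic
    · exact ⟨H, le_rfl, hc, hac, fun i j => le_rfl⟩
    · obtain ⟨H', _, _, hlt, _⟩ := delete_edge_step hc hac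
      omega
  | succ m ih =>
    intro H hcard hc
    by_cases hac : H.IsAcyclic
    · exact ⟨H, le_rfl, hc, hac, fun i j => le_rfl⟩
    · obtain ⟨H', hc', hle, hlt, hd⟩ := delete_edge_step hc hac
      obtain ⟨T, hT1, hT2, hT3, hT4⟩ := ih H' (by omega) hc'
      exact ⟨T, hT1.trans hle, hT2, hT3, fun i j => (hd i j).trans (hT4 i j)⟩

end FAlemmas
section Chain
variable {n : ℕ}

/-- membership away from the chain body -/
def chainSF (c : ℕ → Fin n) (k : ℕ) : Finset (Fin n) :=
  Finset.univ.filter (fun z => ∀ i < k, z ≠ c i)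

lemma mem_chainSF {c : ℕ → Fin n} {k : ℕ} {z : Fin n} :
    z ∈ chainSF c k ↔ ∀ i < k, z ≠ c i := by
  simp [chainSF]

/-- A pendant chain `c 0, …, c (k-1)` attached at `w` in a graph `T'`. -/
structure PC (T' : SimpleGraph (Fin n)) (c : ℕ → Fin n) (k : ℕ) (w : Fin n) : Prop where
  kpos : 1 ≤ k
  badj : ∀ i, i + 1 < k → T'.Adj (c i) (c (i+1))
  watt : T'.Adj (c (k-1)) w
  btrap : ∀ i, i < k → ∀ x, T'.Adj (c i) x →
    (i + 1 < k ∧ x = c (i+1)) ∨ (1 ≤ i ∧ x = c (i-1)) ∨ (i = k - 1 ∧ x = w)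
  binj : ∀ i, i < k → ∀ j, j < k → c i = c j → i = j
  wsf : w ∈ chainSF c k

namespace PC

variable {T' : SimpleGraph (Fin n)} {c : ℕ → Fin n} {k : ℕ} {w : Fin n}

lemma find_eq (pc : PC T' c k w) {i : ℕ} (hi : i < k)
    (h : ∃ j, j < k ∧ c j = c i) : Nat.find h = i := by
  have hf := Nat.find_spec h
  exact pc.binj _ hf.1 _ hi hf.2

lemma sf_adj (pc : PC T' c k w) {z : Fin n} (hz : z ∈ chainSF c k) {i : ℕ} (hi : i < k)
    (hadj : T'.Adj (c i) z) : i = k - 1 ∧ z = w := by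
  rcases pc.btrap i hi z hadj with ⟨h1, h2⟩ | ⟨h1, h2⟩ | h
  · exact absurd h2 (mem_chainSF.mp hz _ h1)
  · exact absurd h2 (mem_chainSF.mp hz _ (by omega))
  · exact h

/-- walk along the chain body -/
lemma body_walk (pc : PC T' c k w) :
    ∀ (d i : ℕ), i + d ≤ k - 1 → ∃ p : T'.Walk (c i) (c (i + d)), p.length = d := by
  intro d
  induction d with
  | zero => intro i _; exact ⟨SimpleGraph.Walk.nil, rfl⟩
  | succ d ih =>
    intro i hi
    obtain ⟨p, hp⟩ := ih (i+1) (by omega)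
    have hk := pc.kpos
    have he : c (i + 1 + d) = c (i + (d+1)) := by congr 1; omega
    refine ⟨SimpleGraph.Walk.cons (pc.badj i (by omega)) (p.copy rfl he), ?_⟩
    rw [SimpleGraph.Walk.length_cons, SimpleGraph.Walk.length_copy, hp]

/-- walk from a chain-body vertex to the attachment -/
lemma walk_to_w (pc : PC T' c k w) {i : ℕ} (hi : i < k) :
    ∃ p : T'.Walk (c i) w, p.length = k - i := by
  obtain ⟨p, hp⟩ := pc.body_walk (k - 1 - i) i (by omega)
  have he : i + (k - 1 - i) = k - 1 := by omega
  refine ⟨(p.copy rfl (by rw [he])).append (SimpleGraph.Walk.cons pc.watt SimpleGraph.Walk.nil), ?_⟩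
  rw [SimpleGraph.Walk.length_append, SimpleGraph.Walk.length_copy, hp]
  simp only [SimpleGraph.Walk.length_cons, SimpleGraph.Walk.length_nil]
  omega

/-- the general Lipschitz lower bound along a pendant chain -/
lemma lower (pc : PC T' c k w) {z : Fin n} (hz : z ∈ chainSF c k)
    (g : Fin n → ℕ) (hgz : g z = 0)
    (hgadj : ∀ x y, x ∈ chainSF c k → y ∈ chainSF c k → T'.Adj x y → g x ≤ g y + 1)
    (hreach : ∀ x, T'.Reachable x z) :
    (∀ x ∈ chainSF c k, g x ≤ T'.dist x z) ∧
      (∀ i, i < k → (k - i) + g w ≤ T'.dist (c i) z) := by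
  classical
  set val : Fin n → ℕ := fun x =>
    if h : ∃ j, j < k ∧ c j = x then (k - Nat.find h) + g w else g x with hval
  have hvsf : ∀ x ∈ chainSF c k, val x = g x := by
    intro x hx
    show dite _ _ _ = g x
    refine dif_neg ?_
    rintro ⟨j, hj, rfl⟩
    exact (mem_chainSF.mp hx _ hj) rfl
  have hvb : ∀ i, i < k → val (c i) = (k - i) + g w := by
    intro i hi
    have h : ∃ j, j < k ∧ c j = c i := ⟨i, hi, rfl⟩
    show dite _ _ _ = _
    rw [dif_pos h, pc.find_eq hi]
  have hlip : ∀ x y, T'.Adj x y → val x ≤ val y + 1 := by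
    intro x y hadj
    by_cases hx : ∃ j, j < k ∧ c j = x
    · obtain ⟨i, hi, rfl⟩ := hx
      rw [hvb i hi]
      rcases pc.btrap i hi y hadj with ⟨h1, h2⟩ | ⟨h1, h2⟩ | ⟨h1, h2⟩
      · subst h2; rw [hvb _ h1]; omega
      · subst h2; rw [hvb _ (by omega)]; omega
      · subst h2
        rw [hvsf _ pc.wsf]
        omega
    · have hxsf : x ∈ chainSF c k := by
        rw [mem_chainSF]
        intro i hi hne
        exact hx ⟨i, hi, hne.symm⟩
      rw [hvsf _ hxsf]
      by_cases hy : ∃ j, j < k ∧ c j = y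
      · obtain ⟨i, hi, rfl⟩ := hy
        obtain ⟨hik, rfl⟩ := pc.sf_adj hxsf hi hadj.symm
        rw [hvb _ hi]
        have := pc.kpos
        omega
      · have hysf : y ∈ chainSF c k := by
          rw [mem_chainSF]
          intro i hi hne
          exact hy ⟨i, hi, hne.symm⟩
        rw [hvsf _ hysf]
        exact hgadj x y hxsf hysf hadj
  have hvz : val z = 0 := by rw [hvsf _ hz, hgz]
  constructor
  · intro x hx
    rw [← hvsf _ hx]
    exact lipschitz_le_dist val hlip hvz (hreach x)
  · intro i hi
    rw [← hvb i hi]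
    exact lipschitz_le_dist val hlip hvz (hreach (c i))

/-- distance from chain body to outside vertices -/
lemma distD1 (pc : PC T' c k w) (hconn : T'.Connected) {z : Fin n} (hz : z ∈ chainSF c k)
    {i : ℕ} (hi : i < k) : T'.dist (c i) z = (k - i) + T'.dist w z := by
  refine le_antisymm ?_ ?_
  · obtain ⟨p, hp⟩ := pc.walk_to_w hi
    obtain ⟨q, hq⟩ := (hconn w z).exists_walk_length_eq_dist
    have := SimpleGraph.dist_le (p.append q)
    rwa [SimpleGraph.Walk.length_append, hp, hq] at this
  · refine ((pc.lower hz (fun x => T'.dist x z) (by simp) ?_ (fun x => hconn x z)).2 i hi)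
    intro x y _ _ hadj
    show T'.dist x z ≤ T'.dist y z + 1
    have h1 := hconn.dist_triangle (u := x) (v := y) (w := z)
    have h2 := adj_dist_le_one hadj
    omega

/-- distances within the chain body -/
lemma distD2 (pc : PC T' c k w) (hconn : T'.Connected) {i j : ℕ} (hi : i < k) (hj : j < k) :
    T'.dist (c i) (c j) = Nat.dist i j := by
  classical
  refine le_antisymm ?_ ?_
  · rcases le_total i j with h | h
    · obtain ⟨p, hp⟩ := pc.body_walk (j - i) i (by omega)
      have he : i + (j - i) = j := by omega
      have := SimpleGraph.dist_le (p.copy rfl (by rw [he]))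
      simp only [SimpleGraph.Walk.length_copy, hp] at this
      have : T'.dist (c i) (c j) ≤ j - i := this
      simp only [Nat.dist]; omega
    · obtain ⟨p, hp⟩ := pc.body_walk (i - j) j (by omega)
      have he : j + (i - j) = i := by omega
      have := SimpleGraph.dist_le (p.copy rfl (by rw [he])).reverse
      simp only [SimpleGraph.Walk.length_reverse, SimpleGraph.Walk.length_copy, hp] at this
      have : T'.dist (c i) (c j) ≤ i - j := this
      simp only [Nat.dist]; omega
  · set val : Fin n → ℕ := fun x =>
      if h : ∃ m, m < k ∧ c m = x then Nat.dist (Nat.find h) j else k - j with hval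
    have hvb : ∀ m, m < k → val (c m) = Nat.dist m j := by
      intro m hm
      have h : ∃ m', m' < k ∧ c m' = c m := ⟨m, hm, rfl⟩
      show dite _ _ _ = _
      rw [dif_pos h, pc.find_eq hm]
    have hvsf : ∀ x ∈ chainSF c k, val x = k - j := by
      intro x hx
      show dite _ _ _ = _
      refine dif_neg ?_
      rintro ⟨m, hm, rfl⟩
      exact (mem_chainSF.mp hx _ hm) rfl
    have hlip : ∀ x y, T'.Adj x y → val x ≤ val y + 1 := by
      intro x y hadj
      by_cases hx : ∃ m, m < k ∧ c m = x
      · obtain ⟨i', hi', rfl⟩ := hx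
        rw [hvb i' hi']
        rcases pc.btrap i' hi' y hadj with ⟨h1, h2⟩ | ⟨h1, h2⟩ | ⟨h1, h2⟩
        · subst h2; rw [hvb _ h1]; simp only [Nat.dist]; omega
        · subst h2; rw [hvb _ (by omega)]; simp only [Nat.dist]; omega
        · subst h2; rw [hvsf _ pc.wsf]; simp only [Nat.dist]; omega
      · have hxsf : x ∈ chainSF c k := by
          rw [mem_chainSF]; intro m hm hne; exact hx ⟨m, hm, hne.symm⟩
        rw [hvsf _ hxsf]
        by_cases hy : ∃ m, m < k ∧ c m = y
        · obtain ⟨i', hi', rfl⟩ := hy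
          obtain ⟨hik, rfl⟩ := pc.sf_adj hxsf hi' hadj.symm
          rw [hvb _ hi']
          have := pc.kpos
          simp only [Nat.dist]; omega
        · have hysf : y ∈ chainSF c k := by
            rw [mem_chainSF]; intro m hm hne; exact hy ⟨m, hm, hne.symm⟩
          rw [hvsf _ hysf]
          omega
    have hvz : val (c j) = 0 := by rw [hvb j hj]; simp [Nat.dist_self]
    have := lipschitz_le_dist val hlip hvz (hconn (c i) (c j))
    rwa [hvb i hi] at this

/-- geodesic step staying outside the chain -/
lemma closer_sf (pc : PC T' c k w) (hconn : T'.Connected) {x z : Fin n}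
    (hx : x ∈ chainSF c k) (hz : z ∈ chainSF c k) (hxz : x ≠ z) :
    ∃ y, y ∈ chainSF c k ∧ T'.Adj x y ∧ T'.dist y z + 1 = T'.dist x z := by
  obtain ⟨y, hadj, hd⟩ := exists_adj_closer hconn hxz
  refine ⟨y, ?_, hadj, hd⟩
  by_contra hy
  have : ∃ i, i < k ∧ c i = y := by
    rw [mem_chainSF] at hy
    push_neg at hy
    obtain ⟨i, hi, he⟩ := hy
    exact ⟨i, hi, he.symm⟩
  obtain ⟨i, hi, rfl⟩ := this
  obtain ⟨hik, rfl⟩ := pc.sf_adj hx hi hadj.symm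
  have hD := pc.distD1 hconn hz hi
  have := pc.kpos
  omega

end PC
end Chain
section Rehang
variable {n : ℕ}

/-- A pendant chain in `T`, described by degrees. -/
structure PendChain (T : SimpleGraph (Fin n)) (c : ℕ → Fin n) (k : ℕ) : Prop where
  kpos : 1 ≤ k
  adj : ∀ i < k, T.Adj (c i) (c (i+1))
  inj : ∀ i ≤ k, ∀ j ≤ k, c i = c j → i = j
  trap0 : ∀ x, T.Adj (c 0) x → x = c 1
  trapmid : ∀ i, 1 ≤ i → i < k → ∀ x, T.Adj (c i) x → x = c (i-1) ∨ x = c (i+1)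

namespace PendChain
variable {T : SimpleGraph (Fin n)} {c : ℕ → Fin n} {k : ℕ}

lemma trap (hch : PendChain T c k) {i : ℕ} (hi : i < k) {x : Fin n} (h : T.Adj (c i) x) :
    x = c (i+1) ∨ (1 ≤ i ∧ x = c (i-1)) := by
  rcases Nat.eq_zero_or_pos i with rfl | hpos
  · exact Or.inl (hch.trap0 x h)
  · rcases hch.trapmid i hpos hi x h with h1 | h1
    · exact Or.inr ⟨hpos, h1⟩
    · exact Or.inl h1

lemma pc (hch : PendChain T c k) : PC T c k (c k) where
  kpos := hch.kpos
  badj := fun i hi => hch.adj i (by omega)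
  watt := by
    have h := hch.adj (k-1) (by have := hch.kpos; omega)
    have he : k - 1 + 1 = k := by have := hch.kpos; omega
    rwa [he] at h
  btrap := by
    intro i hi x h
    rcases hch.trap hi h with h1 | ⟨h1, h2⟩
    · rcases Nat.lt_or_ge (i+1) k with h2 | h2
      · exact Or.inl ⟨h2, h1⟩
      · have : i = k - 1 := by omega
        subst this
        refine Or.inr (Or.inr ⟨rfl, ?_⟩)
        rwa [show k - 1 + 1 = k by omega] at h1
    · exact Or.inr (Or.inl ⟨h1, h2⟩)
  binj := fun i hi j hj he => hch.inj i (by omega) j (by omega) he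
  wsf := by
    rw [mem_chainSF]
    intro i hi he
    exact absurd (hch.inj k le_rfl i (by omega) he) (by omega)

end PendChain

/-- Moving the pendant chain `c 0 … c (k-1)` from `c k` to `ℓ`. -/
def rehang (T : SimpleGraph (Fin n)) (c : ℕ → Fin n) (k : ℕ) (ℓ : Fin n) :
    SimpleGraph (Fin n) :=
  (T \ SimpleGraph.fromEdgeSet {s(c (k-1), c k)}) ⊔ SimpleGraph.fromEdgeSet {s(c (k-1), ℓ)}

lemma rehang_adj {T : SimpleGraph (Fin n)} {c : ℕ → Fin n} {k : ℕ} {ℓ x y : Fin n} :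
    (rehang T c k ℓ).Adj x y ↔
      ((T.Adj x y ∧ s(x,y) ≠ s(c (k-1), c k)) ∨ (s(x,y) = s(c (k-1), ℓ) ∧ x ≠ y)) := by
  simp only [rehang, SimpleGraph.sup_adj, SimpleGraph.sdiff_adj, SimpleGraph.fromEdgeSet_adj,
    Set.mem_singleton_iff]
  constructor
  · rintro (⟨h1, h2⟩ | ⟨h1, h2⟩)
    · exact Or.inl ⟨h1, fun he => h2 ⟨he, h1.ne⟩⟩
    · exact Or.inr ⟨h1, h2⟩
  · rintro (⟨h1, h2⟩ | h)
    · exact Or.inl ⟨h1, fun hh => h2 hh.1⟩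
    · exact Or.inr h

section RehangFacts
variable {T : SimpleGraph (Fin n)} {c : ℕ → Fin n} {k : ℕ} {ℓ : Fin n}
  (hch : PendChain T c k) (hc : T.Connected) (hℓ : ℓ ∈ chainSF c k) (hℓk : ℓ ≠ c k)

include hch hℓ

lemma rehang_pc : PC (rehang T c k ℓ) c k ℓ where
  kpos := hch.kpos
  badj := by
    intro i hi
    rw [rehang_adj]
    refine Or.inl ⟨hch.adj i (by omega), ?_⟩
    intro he
    rw [Sym2.eq_iff] at he
    rcases he with ⟨h1, h2⟩ | ⟨h1, h2⟩
    · exact absurd (hch.inj i (by omega) (k-1) (by omega) h1) (by omega)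
    · exact absurd (hch.inj i (by omega) k le_rfl h1) (by omega)
  watt := by
    rw [rehang_adj]
    refine Or.inr ⟨rfl, ?_⟩
    have := mem_chainSF.mp hℓ (k-1) (by have := hch.kpos; omega)
    exact fun he => this he.symm
  btrap := by
    intro i hi x h
    rw [rehang_adj] at h
    rcases h with ⟨h1, h2⟩ | ⟨h1, h2⟩
    · rcases hch.trap hi h1 with h3 | ⟨h3, h4⟩
      · rcases Nat.lt_or_ge (i+1) k with h4 | h4
        · exact Or.inl ⟨h4, h3⟩
        · exfalso
          have hik : i = k - 1 := by omega
          apply h2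
          subst h3 hik
          rw [show k - 1 + 1 = k by have := hch.kpos; omega]
      · exact Or.inr (Or.inl ⟨h3, h4⟩)
    · rw [Sym2.eq_iff] at h1
      rcases h1 with ⟨h3, h4⟩ | ⟨h3, h4⟩
      · exact Or.inr (Or.inr ⟨hch.inj i (by omega) (k-1) (by have := hch.kpos; omega) h3, h4⟩)
      · exact absurd h3.symm (mem_chainSF.mp hℓ i hi)
  binj := fun i hi j hj he => hch.inj i (by omega) j (by omega) he
  wsf := hℓ

include hc

lemma rehang_walkS : ∀ (m : ℕ) (x z : Fin n), x ∈ chainSF c k → z ∈ chainSF c k →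
    T.dist x z ≤ m → ∃ w : (rehang T c k ℓ).Walk x z, w.length ≤ T.dist x z := by
  intro m
  induction m with
  | zero =>
    intro x z hx hz hd
    have : x = z := by
      have := (hc.dist_eq_zero_iff (u := x) (v := z)).mp (by omega)
      exact this
    subst this
    exact ⟨SimpleGraph.Walk.nil, by simp⟩
  | succ m ih =>
    intro x z hx hz hd
    by_cases hxz : x = z
    · subst hxz; exact ⟨SimpleGraph.Walk.nil, by simp⟩
    · obtain ⟨y, hySF, hadjT, hdy⟩ := (hch.pc).closer_sf hc hx hz hxz
      obtain ⟨w', hw'⟩ := ih y z hySF hz (by omega)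
      refine ⟨SimpleGraph.Walk.cons ?_ w', ?_⟩
      · rw [rehang_adj]
        refine Or.inl ⟨hadjT, ?_⟩
        intro he
        rw [Sym2.eq_iff] at he
        have hk1 : (k:ℕ) - 1 < k := by have := hch.kpos; omega
        rcases he with ⟨h1, h2⟩ | ⟨h1, h2⟩
        · exact (mem_chainSF.mp hx _ hk1) h1
        · exact (mem_chainSF.mp hySF _ hk1) h2
      · rw [SimpleGraph.Walk.length_cons]
        omega

lemma rehang_connected : (rehang T c k ℓ).Connected := by
  have hreach : ∀ x, (rehang T c k ℓ).Reachable x ℓ := by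
    intro x
    by_cases hx : x ∈ chainSF c k
    · obtain ⟨w, -⟩ := rehang_walkS hch hc hℓ (T.dist x ℓ) x ℓ hx hℓ le_rfl
      exact ⟨w⟩
    · have : ∃ i, i < k ∧ c i = x := by
        rw [mem_chainSF] at hx
        push_neg at hx
        obtain ⟨i, hi, he⟩ := hx
        exact ⟨i, hi, he.symm⟩
      obtain ⟨i, hi, rfl⟩ := this
      obtain ⟨w, -⟩ := (rehang_pc hch hℓ).walk_to_w hi
      exact ⟨w⟩
  rw [connected_iff]
  exact ⟨fun x y => (hreach x).trans (hreach y).symm, hc.nonempty⟩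

lemma rehang_distS {x z : Fin n} (hx : x ∈ chainSF c k) (hz : z ∈ chainSF c k) :
    (rehang T c k ℓ).dist x z = T.dist x z := by
  refine le_antisymm ?_ ?_
  · obtain ⟨w, hw⟩ := rehang_walkS hch hc hℓ (T.dist x z) x z hx hz le_rfl
    exact le_trans (SimpleGraph.dist_le w) hw
  · have hlow := (rehang_pc hch hℓ).lower hz (fun x => T.dist x z) (by simp) ?_ ?_
    · exact hlow.1 x hx
    · intro a b ha hb hadj
      show T.dist a z ≤ T.dist b z + 1
      have hT : T.Adj a b := by
        rw [rehang_adj] at hadj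
        rcases hadj with ⟨h1, -⟩ | ⟨h1, -⟩
        · exact h1
        · exfalso
          rw [Sym2.eq_iff] at h1
          have hk1 : (k:ℕ) - 1 < k := by have := hch.kpos; omega
          rcases h1 with ⟨h2, h3⟩ | ⟨h2, h3⟩
          · exact (mem_chainSF.mp ha _ hk1) h2
          · exact (mem_chainSF.mp hb _ hk1) h3
      have h1 := hc.dist_triangle (u := a) (v := b) (w := z)
      have h2 := adj_dist_le_one hT
      omega
    · exact fun x => (rehang_connected hch hc hℓ) x z

lemma rehang_distD1 {z : Fin n} (hz : z ∈ chainSF c k) {i : ℕ} (hi : i < k) :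
    (rehang T c k ℓ).dist (c i) z = (k - i) + T.dist ℓ z := by
  rw [(rehang_pc hch hℓ).distD1 (rehang_connected hch hc hℓ) hz hi,
    rehang_distS hch hc hℓ hℓ hz]

end RehangFacts
end Rehang
section FArehang
variable {n : ℕ} {T : SimpleGraph (Fin n)} {c : ℕ → Fin n} {k : ℕ} {ℓ : Fin n}
  (A : Matrix (Fin n) (Fin n) ℝ)
  (hch : PendChain T c k) (hc : T.Connected) (hℓ : ℓ ∈ chainSF c k) (hℓk : ℓ ≠ c k)

/-- splitting a sum over all vertices into chain-exterior and chain-body parts -/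
lemma chain_sum_split (hch : PendChain T c k) (F : Fin n → ℝ) :
    ∑ x, F x = (∑ x ∈ chainSF c k, F x) + (∑ i ∈ Finset.range k, F (c i)) := by
  classical
  have hinj : Set.InjOn c (Finset.range k) := by
    intro i hi j hj he
    simp only [Finset.coe_range, Set.mem_Iio] at hi hj
    exact hch.inj i (by omega) j (by omega) he
  have hdisj : Disjoint (chainSF c k) ((Finset.range k).image c) := by
    rw [Finset.disjoint_left]
    intro z hz hz'
    simp only [Finset.mem_image, Finset.mem_range] at hz'
    obtain ⟨i, hi, he⟩ := hz'
    exact (mem_chainSF.mp hz i hi) he.symm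
  have huniv : chainSF c k ∪ (Finset.range k).image c = Finset.univ := by
    apply Finset.eq_univ_iff_forall.mpr
    intro z
    simp only [Finset.mem_union, mem_chainSF, Finset.mem_image, Finset.mem_range]
    by_cases hz : ∀ i < k, z ≠ c i
    · exact Or.inl hz
    · push_neg at hz
      obtain ⟨i, hi, he⟩ := hz
      exact Or.inr ⟨i, hi, he.symm⟩
  rw [show (∑ i ∈ Finset.range k, F (c i)) = ∑ x ∈ (Finset.range k).image c, F x from
    (Finset.sum_image (fun i hi j hj he => hinj (by simpa using hi) (by simpa using hj) he)).symm]
  rw [← Finset.sum_union hdisj, huniv]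

include hch hc hℓ hℓk in
lemma FA_rehang (hsymm : A.IsSymm) :
    FA A (rehang T c k ℓ) = FA A T +
      ((∑ z ∈ chainSF c k, (T.dist ℓ z : ℝ) * (∑ i ∈ Finset.range k, A (c i) z)) -
       (∑ z ∈ chainSF c k, (T.dist (c k) z : ℝ) * (∑ i ∈ Finset.range k, A (c i) z))) := by
  classical
  set T' := rehang T c k ℓ with hT'
  have hconn' : T'.Connected := rehang_connected hch hc hℓ
  set S := chainSF c k with hS
  -- block identities
  have e1 : ∀ x ∈ S, ∀ y ∈ S, (T'.dist x y : ℝ) = (T.dist x y : ℝ) := by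
    intro x hx y hy
    rw [hT']
    exact_mod_cast rehang_distS hch hc hℓ hx hy
  have e2' : ∀ x ∈ S, ∀ i ∈ Finset.range k, (T'.dist x (c i) : ℝ) =
      ((k - i : ℕ) : ℝ) + (T.dist ℓ x : ℝ) := by
    intro x hx i hi
    rw [hT', SimpleGraph.dist_comm]
    exact_mod_cast rehang_distD1 hch hc hℓ hx (Finset.mem_range.mp hi)
  have e2 : ∀ x ∈ S, ∀ i ∈ Finset.range k, (T.dist x (c i) : ℝ) =
      ((k - i : ℕ) : ℝ) + (T.dist (c k) x : ℝ) := by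
    intro x hx i hi
    rw [SimpleGraph.dist_comm]
    exact_mod_cast (hch.pc).distD1 hc hx (Finset.mem_range.mp hi)
  have e4 : ∀ i ∈ Finset.range k, ∀ j ∈ Finset.range k, (T'.dist (c i) (c j) : ℝ) =
      (T.dist (c i) (c j) : ℝ) := by
    intro i hi j hj
    rw [(rehang_pc hch hℓ).distD2 hconn' (Finset.mem_range.mp hi) (Finset.mem_range.mp hj),
      (hch.pc).distD2 hc (Finset.mem_range.mp hi) (Finset.mem_range.mp hj)]
  -- the symmetric weight of the chain at z
  set Az : Fin n → ℝ := fun z => ∑ i ∈ Finset.range k, A (c i) z with hAz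
  have hAz' : ∀ z, (∑ i ∈ Finset.range k, A z (c i)) = Az z := by
    intro z
    exact Finset.sum_congr rfl fun i _ => hsymm.apply z (c i) ▸ (hsymm.apply (c i) z).symm ▸ rfl
  set DL : ℝ := ∑ z ∈ S, (T.dist ℓ z : ℝ) * Az z with hDL
  set DV : ℝ := ∑ z ∈ S, (T.dist (c k) z : ℝ) * Az z with hDV
  -- main double-sum identity
  have main : (∑ x, ∑ y, (T'.dist x y : ℝ) * A x y)
      = (∑ x, ∑ y, (T.dist x y : ℝ) * A x y) + 2 * (DL - DV) := by
    have hsplit2 : ∀ (d : Fin n → Fin n → ℝ),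
        (∑ x, ∑ y, d x y * A x y) =
          ((∑ x ∈ S, ∑ y ∈ S, d x y * A x y) + (∑ x ∈ S, ∑ i ∈ Finset.range k, d x (c i) * A x (c i)))
          + ((∑ i ∈ Finset.range k, ∑ y ∈ S, d (c i) y * A (c i) y)
             + (∑ i ∈ Finset.range k, ∑ j ∈ Finset.range k, d (c i) (c j) * A (c i) (c j))) := by
      intro d
      rw [chain_sum_split hch (fun x => ∑ y, d x y * A x y)]
      congr 1
      · rw [← Finset.sum_add_distrib]
        refine Finset.sum_congr rfl fun x _ => ?_
        exact chain_sum_split hch (fun y => d x y * A x y)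
      · rw [← Finset.sum_add_distrib]
        refine Finset.sum_congr rfl fun i _ => ?_
        exact chain_sum_split hch (fun y => d (c i) y * A (c i) y)
    rw [hsplit2 (fun x y => (T'.dist x y : ℝ)), hsplit2 (fun x y => (T.dist x y : ℝ))]
    have hB1 : (∑ x ∈ S, ∑ y ∈ S, (T'.dist x y : ℝ) * A x y)
        = ∑ x ∈ S, ∑ y ∈ S, (T.dist x y : ℝ) * A x y :=
      Finset.sum_congr rfl fun x hx => Finset.sum_congr rfl fun y hy => by rw [e1 x hx y hy]
    have hB4 : (∑ i ∈ Finset.range k, ∑ j ∈ Finset.range k, (T'.dist (c i) (c j) : ℝ) * A (c i) (c j))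
        = ∑ i ∈ Finset.range k, ∑ j ∈ Finset.range k, (T.dist (c i) (c j) : ℝ) * A (c i) (c j) :=
      Finset.sum_congr rfl fun i hi => Finset.sum_congr rfl fun j hj => by rw [e4 i hi j hj]
    have hB2 : (∑ x ∈ S, ∑ i ∈ Finset.range k, (T'.dist x (c i) : ℝ) * A x (c i))
        = (∑ x ∈ S, ∑ i ∈ Finset.range k, (T.dist x (c i) : ℝ) * A x (c i)) + (DL - DV) := by
      have : ∀ x ∈ S, (∑ i ∈ Finset.range k, (T'.dist x (c i) : ℝ) * A x (c i))
          = (∑ i ∈ Finset.range k, (T.dist x (c i) : ℝ) * A x (c i))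
            + ((T.dist ℓ x : ℝ) - (T.dist (c k) x : ℝ)) * Az x := by
        intro x hx
        rw [← hAz' x, Finset.mul_sum, ← Finset.sum_add_distrib]
        refine Finset.sum_congr rfl fun i hi => ?_
        rw [e2' x hx i hi, e2 x hx i hi]
        ring
      rw [Finset.sum_congr rfl this, Finset.sum_add_distrib]
      congr 1
      rw [hDL, hDV, ← Finset.sum_sub_distrib]
      refine Finset.sum_congr rfl fun z hz => ?_
      rw [SimpleGraph.dist_comm (u := ℓ), SimpleGraph.dist_comm (u := c k)]
      ring
    have hB3 : (∑ i ∈ Finset.range k, ∑ y ∈ S, (T'.dist (c i) y : ℝ) * A (c i) y)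
        = (∑ i ∈ Finset.range k, ∑ y ∈ S, (T.dist (c i) y : ℝ) * A (c i) y) + (DL - DV) := by
      have hswap1 : (∑ i ∈ Finset.range k, ∑ y ∈ S, (T'.dist (c i) y : ℝ) * A (c i) y)
          = ∑ y ∈ S, ∑ i ∈ Finset.range k, (T'.dist (c i) y : ℝ) * A (c i) y := Finset.sum_comm
      have hswap2 : (∑ i ∈ Finset.range k, ∑ y ∈ S, (T.dist (c i) y : ℝ) * A (c i) y)
          = ∑ y ∈ S, ∑ i ∈ Finset.range k, (T.dist (c i) y : ℝ) * A (c i) y := Finset.sum_comm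
      rw [hswap1, hswap2]
      have : ∀ y ∈ S, (∑ i ∈ Finset.range k, (T'.dist (c i) y : ℝ) * A (c i) y)
          = (∑ i ∈ Finset.range k, (T.dist (c i) y : ℝ) * A (c i) y)
            + ((T.dist ℓ y : ℝ) - (T.dist (c k) y : ℝ)) * Az y := by
        intro y hy
        rw [hAz, Finset.mul_sum, ← Finset.sum_add_distrib]
        refine Finset.sum_congr rfl fun i hi => ?_
        have f1 : (T'.dist (c i) y : ℝ) = ((k - i : ℕ) : ℝ) + (T.dist ℓ y : ℝ) := by
          rw [hT']
          exact_mod_cast rehang_distD1 hch hc hℓ hy (Finset.mem_range.mp hi)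
        have f2 : (T.dist (c i) y : ℝ) = ((k - i : ℕ) : ℝ) + (T.dist (c k) y : ℝ) := by
          exact_mod_cast (hch.pc).distD1 hc hy (Finset.mem_range.mp hi)
        rw [f1, f2]
        ring
      rw [Finset.sum_congr rfl this, Finset.sum_add_distrib]
      congr 1
      rw [hDL, hDV, ← Finset.sum_sub_distrib]
      refine Finset.sum_congr rfl fun z hz => ?_
      rw [SimpleGraph.dist_comm (u := ℓ), SimpleGraph.dist_comm (u := c k)]
      ring
    rw [hB1, hB2, hB3, hB4]
    ring
  rw [FA_eq_half A hsymm, FA_eq_half A hsymm, main]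
  ring

end FArehang
section Fanalysis
variable {n : ℕ}

/-- chain weight at `z` -/
noncomputable def AzR (A : Matrix (Fin n) (Fin n) ℝ) (c : ℕ → Fin n) (k : ℕ) (z : Fin n) : ℝ :=
  ∑ i ∈ Finset.range k, A (c i) z

/-- the weighted distance-sum functional -/
noncomputable def fB (A : Matrix (Fin n) (Fin n) ℝ) (T : SimpleGraph (Fin n))
    (c : ℕ → Fin n) (k : ℕ) (p : Fin n) : ℝ :=
  ∑ z ∈ chainSF c k, (T.dist p z : ℝ) * AzR A c k z

open Classical in
/-- neighbours of `p` outside the chain body -/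
noncomputable def NSfin (T : SimpleGraph (Fin n)) (c : ℕ → Fin n) (k : ℕ) (p : Fin n) :
    Finset (Fin n) :=
  Finset.univ.filter (fun q => T.Adj p q ∧ q ∈ chainSF c k)

lemma mem_NSfin {T : SimpleGraph (Fin n)} {c : ℕ → Fin n} {k : ℕ} {p q : Fin n} :
    q ∈ NSfin T c k p ↔ T.Adj p q ∧ q ∈ chainSF c k := by
  simp [NSfin]

lemma exists_gt_of_sum_pos {α : Type*} {s : Finset α} {F : α → ℝ} (h : 0 < ∑ x ∈ s, F x) :
    ∃ x ∈ s, 0 < F x := by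
  by_contra hno
  push_neg at hno
  exact absurd (Finset.sum_nonpos hno) (by linarith)

variable {T : SimpleGraph (Fin n)} {c : ℕ → Fin n} {k : ℕ}
  (A : Matrix (Fin n) (Fin n) ℝ)

lemma improve_lemma (hch : PendChain T c k) (hc : T.Connected) {ℓ : Fin n}
    (hℓ : ℓ ∈ chainSF c k) (hℓk : ℓ ≠ c k) (hsymm : A.IsSymm)
    (hlt : fB A T c k (c k) < fB A T c k ℓ) :
    ∃ H' : SimpleGraph (Fin n), H'.Connected ∧ FA A T < FA A H' := by
  refine ⟨rehang T c k ℓ, rehang_connected hch hc hℓ, ?_⟩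
  rw [FA_rehang A hch hc hℓ hℓk hsymm]
  unfold fB AzR at hlt
  linarith

lemma nbr_sum (hch : PendChain T c k) (hc : T.Connected) (ha : T.IsAcyclic)
    {p : Fin n} (hp : p ∈ chainSF c k) :
    ∑ q ∈ NSfin T c k p, (fB A T c k q - fB A T c k p)
      = (((NSfin T c k p).card : ℝ) - 2) * (∑ z ∈ chainSF c k, AzR A c k z)
        + 2 * AzR A c k p := by
  classical
  have hclose : ∀ q ∈ NSfin T c k p, ∀ z : Fin n,
      (T.dist q z + 1 = T.dist p z ∨ T.dist p z + 1 = T.dist q z) := by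
    intro q hq z
    have hadj : T.Adj p q := (mem_NSfin.mp hq).1
    have h := adj_dist_cases hc ha hadj z
    have e1 : T.dist z p = T.dist p z := SimpleGraph.dist_comm
    have e2 : T.dist z q = T.dist q z := SimpleGraph.dist_comm
    omega
  have hstep1 : ∀ q ∈ NSfin T c k p, fB A T c k q - fB A T c k p
      = (∑ z ∈ chainSF c k, AzR A c k z)
        - 2 * (∑ z ∈ chainSF c k, if T.dist q z < T.dist p z then AzR A c k z else 0) := by
    intro q hq
    unfold fB
    rw [← Finset.sum_sub_distrib, Finset.mul_sum, ← Finset.sum_sub_distrib]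
    refine Finset.sum_congr rfl fun z hz => ?_
    rcases hclose q hq z with h | h
    · rw [if_pos (by omega)]
      have hq' : (T.dist q z : ℝ) + 1 = T.dist p z := by exact_mod_cast h
      rw [← hq']
      ring
    · rw [if_neg (by omega)]
      have hq' : (T.dist p z : ℝ) + 1 = T.dist q z := by exact_mod_cast h
      rw [← hq']
      ring
  have hBsum : ∑ q ∈ NSfin T c k p, (∑ z ∈ chainSF c k,
      if T.dist q z < T.dist p z then AzR A c k z else 0)
      = (∑ z ∈ chainSF c k, AzR A c k z) - AzR A c k p := by
    rw [Finset.sum_comm]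
    have hinner : ∀ z ∈ chainSF c k, (∑ q ∈ NSfin T c k p,
        if T.dist q z < T.dist p z then AzR A c k z else 0)
        = if z = p then 0 else AzR A c k z := by
      intro z hz
      by_cases hzp : z = p
      · subst hzp
        rw [if_pos rfl]
        refine Finset.sum_eq_zero fun q hq => if_neg ?_
        rw [SimpleGraph.dist_self]
        omega
      · rw [if_neg hzp]
        obtain ⟨y, hyadj, hyd⟩ := exists_adj_closer hc (show p ≠ z from fun h => hzp h.symm)
        have hyS : y ∈ chainSF c k := by
          by_contra hy
          have : ∃ i, i < k ∧ c i = y := by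
            rw [mem_chainSF] at hy
            push_neg at hy
            obtain ⟨i, hi, he⟩ := hy
            exact ⟨i, hi, he.symm⟩
          obtain ⟨i, hi, rfl⟩ := this
          obtain ⟨hik, rfl⟩ := (hch.pc).sf_adj hp hi hyadj.symm
          have hd1 := (hch.pc).distD1 hc hz hi
          have := hch.kpos
          omega
        have hmem : y ∈ NSfin T c k p := mem_NSfin.mpr ⟨hyadj, hyS⟩
        rw [Finset.sum_eq_single_of_mem y hmem ?_, if_pos (by omega)]
        intro q hq hqy
        refine if_neg ?_
        intro hlt
        have hadj : T.Adj p q := (mem_NSfin.mp hq).1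
        have hcl : T.dist q z + 1 = T.dist p z := by
          rcases hclose q hq z with h | h
          · exact h
          · omega
        exact hqy (closer_unique hc ha hadj hyadj hcl hyd)
    rw [Finset.sum_congr rfl hinner]
    have h2 : ∀ z ∈ chainSF c k, (if z = p then 0 else AzR A c k z)
        = AzR A c k z - (if z = p then AzR A c k z else 0) := by
      intro z _
      by_cases h : z = p
      · subst h; simp
      · simp [h]
    rw [Finset.sum_congr rfl h2, Finset.sum_sub_distrib]
    congr 1
    rw [Finset.sum_ite_eq' (chainSF c k) p (AzR A c k), if_pos hp]
  rw [Finset.sum_congr rfl (hstep1), Finset.sum_sub_distrib, Finset.sum_const,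
    ← Finset.mul_sum, hBsum]
  push_cast
  ring

end Fanalysis
section Core
variable {n : ℕ} {T : SimpleGraph (Fin n)} {c : ℕ → Fin n} {k : ℕ}
  (A : Matrix (Fin n) (Fin n) ℝ)

lemma AzR_nonneg (hnn : ∀ i j, 0 ≤ A i j) (z : Fin n) : 0 ≤ AzR A c k z :=
  Finset.sum_nonneg fun i _ => hnn _ _

lemma improve_of_pos (hch : PendChain T c k) (hc : T.Connected) (ha : T.IsAcyclic)
    (hsymm : A.IsSymm)
    (hpos : 0 < (((NSfin T c k (c k)).card : ℝ) - 2) * (∑ z ∈ chainSF c k, AzR A c k z)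
        + 2 * AzR A c k (c k)) :
    ∃ H' : SimpleGraph (Fin n), H'.Connected ∧ FA A T < FA A H' := by
  have h := nbr_sum A hch hc ha (hch.pc).wsf
  have hpos' : 0 < ∑ q ∈ NSfin T c k (c k), (fB A T c k q - fB A T c k (c k)) := by
    rw [h]; exact hpos
  obtain ⟨q, hq, hqpos⟩ := exists_gt_of_sum_pos hpos'
  have hqS : q ∈ chainSF c k := (mem_NSfin.mp hq).2
  have hqk : q ≠ c k := ((mem_NSfin.mp hq).1).ne'
  exact improve_lemma A hch hc hqS hqk hsymm (by linarith)

lemma AzR_pos_of_two (hch : PendChain T c k) (hsymm : A.IsSymm) (hnn : ∀ i j, 0 ≤ A i j)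
    (hrow : ∀ i j₁ j₂ : Fin n, j₁ ≠ i → j₂ ≠ i → A i j₁ = 0 → A i j₂ = 0 → j₁ = j₂)
    (hk : 2 ≤ k) {z : Fin n} (hz : z ∈ chainSF c k) : 0 < AzR A c k z := by
  rcases (AzR_nonneg A hnn z (c := c) (k := k)).lt_or_eq with h | h
  · exact h
  · exfalso
    have hall : ∀ i ∈ Finset.range k, A (c i) z = 0 := by
      rw [← Finset.sum_eq_zero_iff_of_nonneg (fun i _ => hnn _ _)]
      exact h.symm
    have h0 : A z (c 0) = 0 := by rw [hsymm.apply]; exact hall 0 (by simp; omega)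
    have h1 : A z (c 1) = 0 := by rw [hsymm.apply]; exact hall 1 (by simp; omega)
    have := hrow z (c 0) (c 1) (fun he => (mem_chainSF.mp hz 0 (by omega)) he.symm)
      (fun he => (mem_chainSF.mp hz 1 (by omega)) he.symm) h0 h1
    exact absurd (hch.inj 0 (by omega) 1 (by omega) this) (by omega)

lemma core_contra (hch : PendChain T c k) (hc : T.Connected) (ha : T.IsAcyclic)
    (hsymm : A.IsSymm) (hnn : ∀ i j, 0 ≤ A i j)
    (hrow : ∀ i j₁ j₂ : Fin n, j₁ ≠ i → j₂ ≠ i → A i j₁ = 0 → A i j₂ = 0 → j₁ = j₂)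
    (hdd : 2 ≤ (NSfin T c k (c k)).card)
    (HMAX : ∀ H' : SimpleGraph (Fin n), H'.Connected → FA A H' ≤ FA A T) : False := by
  classical
  have himp : ¬ ∃ H' : SimpleGraph (Fin n), H'.Connected ∧ FA A T < FA A H' := by
    rintro ⟨H', h1, h2⟩
    exact absurd (HMAX H' h1) (by linarith)
  have hASFnn : (0:ℝ) ≤ ∑ z ∈ chainSF c k, AzR A c k z :=
    Finset.sum_nonneg fun z _ => AzR_nonneg A hnn z
  have hddR : (2:ℝ) ≤ ((NSfin T c k (c k)).card : ℝ) := by exact_mod_cast hdd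
  obtain ⟨q₁, hq₁, q₂, hq₂, hne⟩ := Finset.one_lt_card.mp (by omega : 1 < (NSfin T c k (c k)).card)
  rcases lt_or_ge 1 k with hk2 | hk1
  · -- k ≥ 2 : the chain weight at the attachment is positive
    have hAv : 0 < AzR A c k (c k) := AzR_pos_of_two A hch hsymm hnn hrow (by omega) (hch.pc).wsf
    exact himp (improve_of_pos A hch hc ha hsymm (by nlinarith))
  · -- k = 1
    have hk : k = 1 := by have := hch.kpos; omega
    subst hk
    have hAz1 : ∀ z, AzR A c 1 z = A (c 0) z := fun z => Finset.sum_range_one _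
    set v := c 1 with hv
    by_cases hAv : 0 < A (c 0) v
    · refine himp (improve_of_pos A hch hc ha hsymm ?_)
      rw [hAz1]
      nlinarith
    · have hAv0 : A (c 0) v = 0 := le_antisymm (not_lt.mp hAv) (hnn _ _)
      have hposz : ∀ z, z ∈ chainSF c 1 → z ≠ v → 0 < A (c 0) z := by
        intro z hz hzv
        rcases (hnn (c 0) z).lt_or_eq with h | h
        · exact h
        · exfalso
          refine hzv (hrow (c 0) z v ?_ ?_ h.symm hAv0)
          · exact fun he => (mem_chainSF.mp hz 0 (by omega)) he
          · rw [hv]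
            exact fun he => absurd (hch.inj 1 (by omega) 0 (by omega) he) (by omega)
      have hq₁S : q₁ ∈ chainSF c 1 := (mem_NSfin.mp hq₁).2
      have hq₁v : q₁ ≠ v := ((mem_NSfin.mp hq₁).1).ne'
      have hASFpos : 0 < ∑ z ∈ chainSF c 1, AzR A c 1 z := by
        refine Finset.sum_pos' (fun z _ => AzR_nonneg A hnn z) ⟨q₁, hq₁S, ?_⟩
        rw [hAz1]
        exact hposz q₁ hq₁S hq₁v
      rcases lt_or_ge 2 ((NSfin T c 1 v).card) with hdd3 | hdd2
      · refine himp (improve_of_pos A hch hc ha hsymm ?_)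
        have h3 : (3:ℝ) ≤ ((NSfin T c 1 v).card : ℝ) := by exact_mod_cast hdd3
        have hAvnn : 0 ≤ AzR A c 1 v := AzR_nonneg A hnn v
        nlinarith
      · have hcard2 : (NSfin T c 1 v).card = 2 := le_antisymm hdd2 hdd
        have hsum0 : ∑ q ∈ NSfin T c 1 v, (fB A T c 1 q - fB A T c 1 v) = 0 := by
          rw [nbr_sum A hch hc ha (hch.pc).wsf, hcard2, hAz1, hAv0]
          norm_num
        by_cases hex : ∃ q ∈ NSfin T c 1 v, fB A T c 1 v < fB A T c 1 q
        · obtain ⟨q, hq, hlt⟩ := hex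
          exact himp (improve_lemma A hch hc (mem_NSfin.mp hq).2 ((mem_NSfin.mp hq).1).ne'
            hsymm hlt)
        · push_neg at hex
          have hall0 := (Finset.sum_eq_zero_iff_of_nonpos
            (fun q hq => by have := hex q hq; linarith)).mp hsum0
          have hfq₁ : fB A T c 1 q₁ = fB A T c 1 v := by have := hall0 q₁ hq₁; linarith
          have hq₁nb : ∀ x, T.Adj q₁ x → x ∈ chainSF c 1 := by
            intro x hx
            by_contra hxS
            have : ∃ i, i < 1 ∧ c i = x := by
              rw [mem_chainSF] at hxS
              push_neg at hxS
              obtain ⟨i, hi, he⟩ := hxS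
              exact ⟨i, hi, he.symm⟩
            obtain ⟨i, hi, rfl⟩ := this
            exact hq₁v ((hch.pc).sf_adj hq₁S hi hx.symm).2
          have hvq₁ : v ∈ NSfin T c 1 q₁ :=
            mem_NSfin.mpr ⟨(mem_NSfin.mp hq₁).1.symm, (hch.pc).wsf⟩
          rcases lt_or_ge 1 ((NSfin T c 1 q₁).card) with hc2 | hc1
          · have hsum := nbr_sum A hch hc ha hq₁S
            have hAq₁ : 0 < AzR A c 1 q₁ := by
              rw [hAz1]
              exact hposz q₁ hq₁S hq₁v
            have h2c : (2:ℝ) ≤ ((NSfin T c 1 q₁).card : ℝ) := by exact_mod_cast hc2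
            have hpos : 0 < ∑ q ∈ NSfin T c 1 q₁, (fB A T c 1 q - fB A T c 1 q₁) := by
              rw [hsum]
              nlinarith
            obtain ⟨q, hq, hqpos⟩ := exists_gt_of_sum_pos hpos
            have hq_S : q ∈ chainSF c 1 := (mem_NSfin.mp hq).2
            have hqv : q ≠ v := by
              intro h
              rw [h, ← hfq₁] at hqpos
              simp at hqpos
            exact himp (improve_lemma A hch hc hq_S hqv hsymm (by linarith))
          · have hcard1 : (NSfin T c 1 q₁).card = 1 :=
              le_antisymm hc1 (Finset.card_pos.mpr ⟨v, hvq₁⟩)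
            have hsingle : ∀ x, T.Adj q₁ x → x = v := by
              intro x hx
              exact Finset.card_le_one.mp (le_of_eq hcard1) x
                (mem_NSfin.mpr ⟨hx, hq₁nb x hx⟩) v hvq₁
            set c₂ : ℕ → Fin n := fun i => if i = 0 then q₁ else v with hc₂
            have hadj₂ : T.Adj q₁ v := (mem_NSfin.mp hq₁).1.symm
            have hch₂ : PendChain T c₂ 1 := by
              refine ⟨le_rfl, ?_, ?_, ?_, ?_⟩
              · intro i hi
                have : i = 0 := by omega
                subst this
                simpa [hc₂] using hadj₂
              · intro i hi j hj he
                have h00 : c₂ 0 = q₁ := by simp [hc₂]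
                have h11 : c₂ 1 = v := by simp [hc₂]
                interval_cases i <;> interval_cases j
                · rfl
                · rw [h00, h11] at he; exact absurd he hq₁v
                · rw [h00, h11] at he; exact absurd he.symm hq₁v
                · rfl
              · intro x hx
                simp only [hc₂, if_pos rfl] at hx
                have := hsingle x hx
                simp [hc₂, this]
              · intro i h1 h2
                omega
            refine himp (improve_of_pos A hch₂ hc ha hsymm ?_)
            have hv₂ : c₂ 1 = v := by simp [hc₂]
            rw [hv₂]
            have hAz₂ : AzR A c₂ 1 v = A q₁ v := by simp [AzR, hc₂]
            have hAq₁v : 0 < A q₁ v := by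
              rcases (hnn q₁ v).lt_or_eq with h | h
              · exact h
              · exfalso
                have hvq : A v q₁ = 0 := by rw [hsymm.apply]; exact h.symm
                have hv0 : A v (c 0) = 0 := by rw [hsymm.apply]; exact hAv0
                have := hrow v q₁ (c 0) hq₁v
                  (fun he => absurd (hch.inj 0 (by omega) 1 (by omega) he) (by omega)) hvq hv0
                exact (mem_chainSF.mp hq₁S 0 (by omega)) this
            have hcard₂ : 2 ≤ (NSfin T c₂ 1 v).card := by
              refine Finset.one_lt_card.mpr ?_
              refine ⟨q₂, ?_, c 0, ?_, ?_⟩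
              · refine mem_NSfin.mpr ⟨(mem_NSfin.mp hq₂).1, ?_⟩
                rw [mem_chainSF]
                intro i hi
                have : i = 0 := by omega
                subst this
                simp only [hc₂, if_pos rfl]
                exact fun he => hne he.symm
              · refine mem_NSfin.mpr ⟨?_, ?_⟩
                · exact (by simpa [hv] using (hch.adj 0 (by omega)).symm)
                · rw [mem_chainSF]
                  intro i hi
                  have : i = 0 := by omega
                  subst this
                  simp only [hc₂, if_pos rfl]
                  exact fun he => (mem_chainSF.mp hq₁S 0 (by omega)) he.symm
              · exact fun he => (mem_chainSF.mp (mem_NSfin.mp hq₂).2 0 (by omega)) he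
            have hASF₂nn : (0:ℝ) ≤ ∑ z ∈ chainSF c₂ 1, AzR A c₂ 1 z :=
              Finset.sum_nonneg fun z _ => AzR_nonneg A hnn z
            have hcard₂R : (2:ℝ) ≤ ((NSfin T c₂ 1 v).card : ℝ) := by exact_mod_cast hcard₂
            rw [hAz₂]
            nlinarith
end Core
section Driver
variable {n : ℕ} {T : SimpleGraph (Fin n)} (A : Matrix (Fin n) (Fin n) ℝ)

lemma chain_step {c : ℕ → Fin n} {k : ℕ} (hch : PendChain T c k) (hc : T.Connected)
    (ha : T.IsAcyclic) (hsymm : A.IsSymm) (hnn : ∀ i j, 0 ≤ A i j)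
    (hrow : ∀ i j₁ j₂ : Fin n, j₁ ≠ i → j₂ ≠ i → A i j₁ = 0 → A i j₂ = 0 → j₁ = j₂)
    (HMAX : ∀ H' : SimpleGraph (Fin n), H'.Connected → FA A H' ≤ FA A T) :
    (∃ c', PendChain T c' (k+1)) ∨ (∃ σ : Equiv.Perm (Fin n), T = pathOf σ) := by
  classical
  have hkpos := hch.kpos
  rcases Nat.lt_or_ge ((NSfin T c k (c k)).card) 1 with h0 | h1
  · -- no neighbours outside the chain : T is a path
    have hempty : NSfin T c k (c k) = ∅ := Finset.card_eq_zero.mp (by omega)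
    have hunique : ∀ x, T.Adj (c k) x → x = c (k-1) := by
      intro x hx
      by_cases hxS : x ∈ chainSF c k
      · exact absurd (mem_NSfin.mpr ⟨hx, hxS⟩) (by rw [hempty]; exact Finset.notMem_empty x)
      · have : ∃ i, i < k ∧ c i = x := by
          rw [mem_chainSF] at hxS
          push_neg at hxS
          obtain ⟨i, hi, he⟩ := hxS
          exact ⟨i, hi, he.symm⟩
        obtain ⟨i, hi, rfl⟩ := this
        have := (hch.pc).sf_adj (hch.pc).wsf hi hx.symm
        rw [this.1]
    right
    have hclosure : ∀ (x z : Fin n) (w : T.Walk x z), (∃ i, i ≤ k ∧ c i = x) →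
        ∃ i, i ≤ k ∧ c i = z := by
      intro x z w
      induction w with
      | nil => exact id
      | @cons a b d hadj p ih =>
        rintro ⟨i, hik, rfl⟩
        apply ih
        rcases Nat.lt_or_ge i k with hik' | hik''
        · rcases (hch.pc).btrap i hik' _ hadj with ⟨h1, h2⟩ | ⟨h1, h2⟩ | ⟨h1, h2⟩
          · exact ⟨i+1, by omega, h2.symm⟩
          · exact ⟨i-1, by omega, h2.symm⟩
          · exact ⟨k, le_rfl, h2.symm⟩
        · have hik : i = k := by omega
          rw [hik] at hadj
          exact ⟨k-1, by omega, (hunique _ hadj).symm⟩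
    have hsurj : ∀ z, ∃ i, i ≤ k ∧ c i = z := by
      intro z
      obtain ⟨w⟩ := hc (c 0) z
      exact hclosure _ _ w ⟨0, by omega, rfl⟩
    have hle1 : k + 1 ≤ n := by
      have hinj : Function.Injective (fun i : Fin (k+1) => c i.1) := by
        intro i j he
        exact Fin.ext (hch.inj _ (by omega) _ (by omega) he)
      simpa using Fintype.card_le_of_injective _ hinj
    have hge : n ≤ k + 1 := by
      have hs : Function.Surjective (fun i : Fin (k+1) => c i.1) := by
        intro z
        obtain ⟨i, hik, he⟩ := hsurj z
        exact ⟨⟨i, by omega⟩, he⟩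
      simpa using Fintype.card_le_of_surjective _ hs
    have hbij : Function.Bijective (fun i : Fin n => c i.1) := by
      constructor
      · intro i j he
        exact Fin.ext (hch.inj _ (by omega) _ (by omega) he)
      · intro z
        obtain ⟨i, hik, he⟩ := hsurj z
        exact ⟨⟨i, by omega⟩, he⟩
    set e := Equiv.ofBijective _ hbij with he
    refine ⟨e.symm, ?_⟩
    ext x y
    show T.Adj x y ↔ Nat.dist (e.symm x).1 (e.symm y).1 = 1
    have hx : c (e.symm x).1 = x := Equiv.apply_symm_apply e x
    have hy : c (e.symm y).1 = y := Equiv.apply_symm_apply e y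
    have hxk : (e.symm x).1 ≤ k := by have := (e.symm x).2; omega
    have hyk : (e.symm y).1 ≤ k := by have := (e.symm y).2; omega
    constructor
    · intro hadj
      rw [← hx, ← hy] at hadj
      rcases Nat.lt_or_ge (e.symm x).1 k with hik | hik
      · rcases (hch.pc).btrap _ hik _ hadj with ⟨h1, h2⟩ | ⟨h1, h2⟩ | ⟨h1, h2⟩
        · have : (e.symm y).1 = (e.symm x).1 + 1 := hch.inj _ (by omega) _ (by omega) h2
          simp [Nat.dist]; omega
        · have : (e.symm y).1 = (e.symm x).1 - 1 := hch.inj _ (by omega) _ (by omega) h2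
          simp [Nat.dist]; omega
        · have : (e.symm y).1 = k := hch.inj _ (by omega) _ (by omega) h2
          simp [Nat.dist]; omega
      · have hik : (e.symm x).1 = k := by omega
        have hadj' : T.Adj (c k) (c (e.symm y).1) := by rwa [hik] at hadj
        have h2 : c (e.symm y).1 = c (k-1) := hunique _ hadj'
        have : (e.symm y).1 = k - 1 := hch.inj _ (by omega) _ (by omega) h2
        simp [Nat.dist]; omega
    · intro hd
      have hcase : (e.symm y).1 = (e.symm x).1 + 1 ∨ (e.symm x).1 = (e.symm y).1 + 1 := by
        simp [Nat.dist] at hd; omega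
      rcases hcase with hcase | hcase
      · have hlt : (e.symm x).1 < k := by omega
        have := hch.adj _ hlt
        rw [← hcase] at this
        rwa [hx, hy] at this
      · have hlt : (e.symm y).1 < k := by omega
        have := (hch.adj _ hlt).symm
        rw [← hcase] at this
        rwa [hx, hy] at this
  · rcases Nat.lt_or_ge ((NSfin T c k (c k)).card) 2 with hcc | hcc
    · -- exactly one outside neighbour : extend the chain
      have hcard1 : (NSfin T c k (c k)).card = 1 := by omega
      obtain ⟨q, hq⟩ := Finset.card_eq_one.mp hcard1
      have hqmem : q ∈ NSfin T c k (c k) := by rw [hq]; exact Finset.mem_singleton_self q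
      have hqadj : T.Adj (c k) q := (mem_NSfin.mp hqmem).1
      have hqS : q ∈ chainSF c k := (mem_NSfin.mp hqmem).2
      left
      set c' : ℕ → Fin n := fun i => if i = k + 1 then q else c i with hc'
      have hck : ∀ i, i ≤ k → c' i = c i := fun i hi => if_neg (by omega)
      have hck' : c' (k+1) = q := if_pos rfl
      refine ⟨c', ⟨by omega, ?_, ?_, ?_, ?_⟩⟩
      · intro i hi
        rcases Nat.lt_or_ge i k with h | h
        · rw [hck i (by omega), hck (i+1) (by omega)]
          exact hch.adj i h
        · have : i = k := by omega
          subst this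
          rw [hck i le_rfl, hck']
          exact hqadj
      · intro i hi j hj he
        rcases Nat.lt_or_ge i (k+1) with h | h <;> rcases Nat.lt_or_ge j (k+1) with h' | h'
        · rw [hck i (by omega), hck j (by omega)] at he
          exact hch.inj i (by omega) j (by omega) he
        · have hj' : j = k + 1 := by omega
          subst hj'
          rw [hck i (by omega), hck'] at he
          exfalso
          rcases Nat.lt_or_ge i k with hik | hik
          · exact (mem_chainSF.mp hqS i hik) he.symm
          · have : i = k := by omega
            subst this
            exact hqadj.ne he
        · have hi' : i = k + 1 := by omega
          subst hi'
          rw [hck j (by omega), hck'] at he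
          exfalso
          rcases Nat.lt_or_ge j k with hjk | hjk
          · exact (mem_chainSF.mp hqS j hjk) he
          · have : j = k := by omega
            subst this
            exact hqadj.ne he.symm
        · omega
      · intro x hx
        rw [hck 0 (by omega)] at hx
        rw [hck 1 (by omega)]
        exact hch.trap0 x hx
      · intro i h1 h2 x hx
        rcases Nat.lt_or_ge i k with h | h
        · rw [hck i (by omega)] at hx
          rw [hck (i-1) (by omega), hck (i+1) (by omega)]
          exact hch.trapmid i h1 h x hx
        · have hik : i = k := by omega
          rw [hik] at hx ⊢
          rw [hck k le_rfl] at hx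
          rw [hck (k-1) (by omega), hck']
          by_cases hxS : x ∈ chainSF c k
          · right
            have : x ∈ NSfin T c k (c k) := mem_NSfin.mpr ⟨hx, hxS⟩
            rw [hq] at this
            exact Finset.mem_singleton.mp this
          · left
            have : ∃ i', i' < k ∧ c i' = x := by
              rw [mem_chainSF] at hxS
              push_neg at hxS
              obtain ⟨i', hi', he⟩ := hxS
              exact ⟨i', hi', he.symm⟩
            obtain ⟨i', hi', rfl⟩ := this
            have := (hch.pc).sf_adj (hch.pc).wsf hi' hx.symm
            rw [this.1]
    · exact absurd (core_contra A hch hc ha hsymm hnn hrow hcc HMAX) (fun h => h)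

lemma tree_max_path (hc : T.Connected) (ha : T.IsAcyclic) (hsymm : A.IsSymm)
    (hnn : ∀ i j, 0 ≤ A i j)
    (hrow : ∀ i j₁ j₂ : Fin n, j₁ ≠ i → j₂ ≠ i → A i j₁ = 0 → A i j₂ = 0 → j₁ = j₂)
    (HMAX : ∀ H' : SimpleGraph (Fin n), H'.Connected → FA A H' ≤ FA A T) :
    ∃ σ : Equiv.Perm (Fin n), T = pathOf σ := by
  classical
  rcases Nat.lt_or_ge n 2 with hn | hn
  · match n, T, hc with
    | 0, T, hc => exact hc.nonempty.elim fun x => x.elim0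
    | 1, T, hc =>
      refine ⟨Equiv.refl _, ?_⟩
      ext x y
      have hxy : x = y := Subsingleton.elim x y
      subst hxy
      constructor
      · intro h
        exact absurd h (SimpleGraph.irrefl T)
      · intro h
        rw [pathOf_adj] at h
        simp [Nat.dist_self] at h
  · have hx₀ : (0:ℕ) < n := by omega
    set x₀ : Fin n := ⟨0, hx₀⟩ with hx₀'
    obtain ⟨u, -, hu⟩ := Finset.exists_max_image Finset.univ (fun z => T.dist x₀ z)
      ⟨x₀, Finset.mem_univ x₀⟩
    have hune : u ≠ x₀ := by
      intro h
      subst h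
      have hz : (⟨1, by omega⟩ : Fin n) ≠ x₀ := by
        intro hh
        rw [hx₀'] at hh
        exact absurd (congrArg Fin.val hh) (by simp)
      have h1 := hc.pos_dist_of_ne (Ne.symm hz)
      have h2 := hu ⟨1, by omega⟩ (Finset.mem_univ _)
      simp only [SimpleGraph.dist_self] at h2
      omega
    obtain ⟨y, hyadj, hyd⟩ := exists_adj_closer hc hune
    have huniq : ∀ x, T.Adj u x → x = y := by
      intro x hx
      rcases adj_dist_cases hc ha hx x₀ with h | h
      · have := hu x (Finset.mem_univ x)
        omega
      · refine closer_unique hc ha hx hyadj ?_ hyd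
        have e1 : T.dist x x₀ = T.dist x₀ x := SimpleGraph.dist_comm
        have e2 : T.dist u x₀ = T.dist x₀ u := SimpleGraph.dist_comm
        have e3 : T.dist y x₀ = T.dist x₀ y := SimpleGraph.dist_comm
        omega
    by_contra hno
    push_neg at hno
    have hstep : ∀ k, (∃ c, PendChain T c k) → ∃ c, PendChain T c (k+1) := by
      rintro k ⟨c, hch⟩
      rcases chain_step A hch hc ha hsymm hnn hrow HMAX with h | ⟨σ, hσ⟩
      · exact h
      · exact absurd hσ (hno σ)
    have hbase : ∃ c, PendChain T c 1 := by
      refine ⟨fun i => if i = 0 then u else y, ⟨le_rfl, ?_, ?_, ?_, ?_⟩⟩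
      · intro i hi
        have : i = 0 := by omega
        subst this
        simpa using hyadj
      · intro i hi j hj he
        interval_cases i <;> interval_cases j
        · rfl
        · norm_num at he
          exact absurd he hyadj.ne
        · norm_num at he
          exact absurd he.symm hyadj.ne
        · rfl
      · intro x hx
        simp only [if_pos rfl] at hx
        simpa using huniq x hx
      · intro i h1 h2
        omega
    have hall : ∀ k, ∃ c, PendChain T c (1 + k) := by
      intro k
      induction k with
      | zero => exact hbase
      | succ m ih =>
        have := hstep (1 + m) ih
        rwa [show 1 + m + 1 = 1 + (m + 1) by omega] at this
    obtain ⟨c, hch⟩ := hall n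
    have hinj : Function.Injective (fun i : Fin (n+1) => c i.1) := by
      intro i j he
      exact Fin.ext (hch.inj _ (by omega) _ (by omega) he)
    have := Fintype.card_le_of_injective _ hinj
    simp only [Fintype.card_fin] at this
    omega

end Driver

theorem stmt_3 {n : ℕ} (G : SimpleGraph (Fin n)) (hG : G.Connected)
    (hnotpath : ¬ IsPathGraph G)
    (A : Matrix (Fin n) (Fin n) ℝ) (hsymm : A.IsSymm) (hnn : ∀ i j, 0 ≤ A i j)
    (hrow : ∀ i j₁ j₂ : Fin n, j₁ ≠ i → j₂ ≠ i → A i j₁ = 0 → A i j₂ = 0 → j₁ = j₂) :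
    ∃ P : SimpleGraph (Fin n), IsPathGraph P ∧ FA A G < FA A P := by
  classical
  have hn : 0 < n := by
    obtain ⟨x⟩ := hG.nonempty
    exact x.pos
  obtain ⟨Hm, hHmc, HMAXm⟩ := exists_max_FA A hn
  obtain ⟨Tm, hTmle, hTmc, hTma, hTmd⟩ := exists_acyclic_le Hm hHmc
  have HMAXs : ∀ H' : SimpleGraph (Fin n), H'.Connected → FA A H' ≤ FA A Tm := by
    intro H' h'
    exact (HMAXm H' h').trans (FA_mono A hnn hTmd)
  obtain ⟨σs, hσs⟩ := tree_max_path A hTmc hTma hsymm hnn hrow HMAXs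
  have hTmPath : IsPathGraph Tm := by rw [hσs]; exact isPathGraph_pathOf σs
  obtain ⟨T, hTle, hTc, hTa, hTd⟩ := exists_acyclic_le G hG
  have hFAG : FA A G ≤ FA A T := FA_mono A hnn hTd
  by_cases hTσ : ∃ σ : Equiv.Perm (Fin n), T = pathOf σ
  · obtain ⟨σ, hσ⟩ := hTσ
    have hdT : ∀ i j, T.dist i j = Nat.dist (σ i).1 (σ j).1 := fun i j => by
      rw [hσ]; exact pathOf_dist σ i j
    by_cases hsub : ∀ x y : Fin n, G.Adj x y → T.Adj x y
    · refine absurd ?_ hnotpath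
      have hGT : G = T := by
        ext x y
        exact ⟨hsub x y, fun h => hTle h⟩
      rw [hGT, hσ]
      exact isPathGraph_pathOf σ
    · push_neg at hsub
      obtain ⟨x, y, hGxy, hTxy⟩ := hsub
      by_cases hwin : ∃ u w : Fin n, u ≠ w ∧ G.dist u w < T.dist u w ∧ 0 < A u w
      · obtain ⟨u, w, hne, hdlt, hA⟩ := hwin
        exact ⟨Tm, hTmPath, lt_of_lt_of_le (FA_strict A hsymm hnn hTd hne hdlt hA)
          (HMAXs T hTc)⟩
      · push_neg at hwin
        have hwin0 : ∀ u w : Fin n, u ≠ w → G.dist u w < T.dist u w → A u w = 0 :=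
          fun u w h1 h2 => le_antisymm (hwin u w h1 h2) (hnn u w)
        have hchord2 : ∀ u w : Fin n, G.Adj u w → ¬T.Adj u w → (σ u).1 < (σ w).1 →
            (σ u).1 + 2 ≤ (σ w).1 := by
          intro u w hG' hT' hlt'
          have h1 : Nat.dist (σ u).1 (σ w).1 ≠ 1 := by
            intro h
            have : (pathOf σ).Adj u w := pathOf_adj.mpr h
            rw [← hσ] at this
            exact hT' this
          simp only [Nat.dist] at h1
          omega
        have hdistlt : ∀ u w : Fin n, G.Adj u w → (σ u).1 + 2 ≤ (σ w).1 →
            G.dist u w < T.dist u w := by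
          intro u w hG' h2
          have h0 : G.dist u w ≤ 1 := adj_dist_le_one hG'
          rw [hdT]
          simp only [Nat.dist]
          omega
        have hkey : ∀ u w : Fin n, G.Adj u w → ¬T.Adj u w → (σ u).1 < (σ w).1 →
            (σ u).1 = 0 ∧ (σ w).1 = n - 1 := by
          intro u w hG' hT' hlt'
          have hab := hchord2 u w hG' hT' hlt'
          have hA0 : A u w = 0 := hwin0 u w hG'.ne (hdistlt u w hG' hab)
          have hwn : (σ w).1 < n := (σ w).2
          constructor
          · by_contra ha
            have hapos : 0 < (σ u).1 := by omega
            set u' := σ.symm ⟨(σ u).1 - 1, by omega⟩ with hu'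
            have hσu' : (σ u').1 = (σ u).1 - 1 := by rw [hu', Equiv.apply_symm_apply]
            have hne1 : u' ≠ w := fun h => by rw [h] at hσu'; omega
            have hne2 : u' ≠ u := fun h => by rw [h] at hσu'; omega
            have hd1 : G.dist u' u ≤ 1 := by
              have h3 : G.dist u' u ≤ T.dist u' u := hTd u' u
              rw [hdT, hσu'] at h3
              simp only [Nat.dist] at h3
              omega
            have hdstrict : G.dist u' w < T.dist u' w := by
              have htri := hG.dist_triangle (u := u') (v := u) (w := w)
              have hduw := adj_dist_le_one hG'
              rw [hdT, hσu']
              simp only [Nat.dist]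
              omega
            have hApos : 0 < A u' w := by
              rcases (hnn u' w).lt_or_eq with h | h
              · exact h
              · exfalso
                have h1 : A w u = 0 := by rw [hsymm.apply]; exact hA0
                have h2 : A w u' = 0 := by rw [hsymm.apply]; exact h.symm
                exact hne2 (hrow w u' u hne1 hG'.ne h2 h1)
            have := hwin0 u' w hne1 hdstrict
            linarith
          · by_contra hb
            have hblt : (σ w).1 + 1 < n := by omega
            set w' := σ.symm ⟨(σ w).1 + 1, by omega⟩ with hw'
            have hσw' : (σ w').1 = (σ w).1 + 1 := by rw [hw', Equiv.apply_symm_apply]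
            have hne1 : w' ≠ u := fun h => by rw [h] at hσw'; omega
            have hne2 : w' ≠ w := fun h => by rw [h] at hσw'; omega
            have hd1 : G.dist w w' ≤ 1 := by
              have h3 : G.dist w w' ≤ T.dist w w' := hTd w w'
              rw [hdT, hσw'] at h3
              simp only [Nat.dist] at h3
              omega
            have hdstrict : G.dist u w' < T.dist u w' := by
              have htri := hG.dist_triangle (u := u) (v := w) (w := w')
              have hduw := adj_dist_le_one hG'
              rw [hdT, hσw']
              simp only [Nat.dist]
              omega
            have hApos : 0 < A u w' := by
              rcases (hnn u w').lt_or_eq with h | h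
              · exact h
              · exfalso
                exact hne2 (hrow u w' w hne1 hG'.ne' h.symm hA0)
            have := hwin0 u w' (fun h => hne1 h.symm) hdstrict
            linarith
        obtain ⟨x₀, y₀, hGx₀, hTx₀, hpos0, hposn⟩ :
            ∃ x₀ y₀, G.Adj x₀ y₀ ∧ ¬T.Adj x₀ y₀ ∧ (σ x₀).1 = 0 ∧ (σ y₀).1 = n - 1 := by
          have hxyne : (σ x).1 ≠ (σ y).1 := fun h => hGxy.ne (σ.injective (Fin.ext h))
          rcases Nat.lt_or_ge (σ x).1 (σ y).1 with h | h
          · obtain ⟨h1, h2⟩ := hkey x y hGxy hTxy h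
            exact ⟨x, y, hGxy, hTxy, h1, h2⟩
          · have h' : (σ y).1 < (σ x).1 := by omega
            obtain ⟨h1, h2⟩ := hkey y x hGxy.symm (fun hh => hTxy hh.symm) h'
            exact ⟨y, x, hGxy.symm, fun hh => hTxy hh.symm, h1, h2⟩
        have hn2 : 2 ≤ n := by
          have h1 : (σ x₀).1 ≠ (σ y₀).1 := fun h => hGx₀.ne (σ.injective (Fin.ext h))
          have h2 : (σ y₀).1 < n := (σ y₀).2
          omega
        have hn3 : 3 ≤ n := by
          have := hchord2 x₀ y₀ hGx₀ hTx₀ (by omega)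
          omega
        obtain ⟨m, rfl⟩ : ∃ m, n = m + 1 := ⟨n - 1, by omega⟩
        have hm2 : 2 ≤ m := by omega
        have hposn' : (σ y₀).1 = m := by omega
        set σ₁ : Equiv.Perm (Fin (m+1)) := σ.trans (Equiv.addRight 1) with hσ₁
        have hσ₁v : ∀ u, (σ₁ u).1 = ((σ u).1 + 1) % (m+1) := by
          intro u
          show ((σ u) + 1).1 = _
          rw [Fin.val_add]
          congr 1
          have : ((1 : Fin (m+1))).1 = 1 := by
            rw [Fin.val_one']
            exact Nat.mod_eq_of_lt (by omega)
          omega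
        have hP₁conn : (pathOf σ₁).Connected := pathOf_connected (by omega) σ₁
        have hP₁le : pathOf σ₁ ≤ G := by
          intro u w hadj
          have hadj' : Nat.dist (σ₁ u).1 (σ₁ w).1 = 1 := hadj
          rw [hσ₁v u, hσ₁v w] at hadj'
          have hPu : (σ u).1 < m + 1 := (σ u).2
          have hQw : (σ w).1 < m + 1 := (σ w).2
          by_cases hPm : (σ u).1 = m
          · have e1 : ((σ u).1 + 1) % (m+1) = 0 := by rw [hPm]; simp
            by_cases hQm : (σ w).1 = m
            · exfalso
              have e2 : ((σ w).1 + 1) % (m+1) = 0 := by rw [hQm]; simp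
              rw [e1, e2] at hadj'
              simp [Nat.dist] at hadj'
            · have e2 : ((σ w).1 + 1) % (m+1) = (σ w).1 + 1 := Nat.mod_eq_of_lt (by omega)
              rw [e1, e2] at hadj'
              have hQ0 : (σ w).1 = 0 := by simp only [Nat.dist] at hadj'; omega
              have hu : u = y₀ := σ.injective (Fin.ext (by omega))
              have hw : w = x₀ := σ.injective (Fin.ext (by omega))
              rw [hu, hw]
              exact hGx₀.symm
          · have e1 : ((σ u).1 + 1) % (m+1) = (σ u).1 + 1 := Nat.mod_eq_of_lt (by omega)
            by_cases hQm : (σ w).1 = m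
            · have e2 : ((σ w).1 + 1) % (m+1) = 0 := by rw [hQm]; simp
              rw [e1, e2] at hadj'
              have hP0 : (σ u).1 = 0 := by simp only [Nat.dist] at hadj'; omega
              have hu : u = x₀ := σ.injective (Fin.ext (by omega))
              have hw : w = y₀ := σ.injective (Fin.ext (by omega))
              rw [hu, hw]
              exact hGx₀
            · have e2 : ((σ w).1 + 1) % (m+1) = (σ w).1 + 1 := Nat.mod_eq_of_lt (by omega)
              rw [e1, e2] at hadj'
              have hTadj : T.Adj u w := by
                rw [hσ]
                refine pathOf_adj.mpr ?_
                simp only [Nat.dist] at hadj' ⊢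
                omega
              exact hTle hTadj
        set w₁ := σ.symm ⟨m - 1, by omega⟩ with hw₁
        have hσw₁ : (σ w₁).1 = m - 1 := by rw [hw₁, Equiv.apply_symm_apply]
        have hTw : T.Adj w₁ y₀ := by
          rw [hσ]
          refine pathOf_adj.mpr ?_
          rw [hσw₁, hposn']
          simp only [Nat.dist]
          omega
        have hGw : G.Adj w₁ y₀ := hTle hTw
        have hne12 : w₁ ≠ y₀ := hGw.ne
        have hstrict : G.dist w₁ y₀ < (pathOf σ₁).dist w₁ y₀ := by
          have h1 := adj_dist_le_one hGw
          rw [pathOf_dist σ₁, hσ₁v, hσ₁v, hσw₁, hposn']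
          have e1 : (m - 1 + 1) % (m + 1) = m := by
            rw [Nat.mod_eq_of_lt (by omega)]
            omega
          have e2 : (m + 1) % (m + 1) = 0 := by simp
          rw [e1, e2]
          simp only [Nat.dist]
          omega
        have hA12 : 0 < A w₁ y₀ := by
          rcases (hnn w₁ y₀).lt_or_eq with h | h
          · exact h
          · exfalso
            have hA0 : A x₀ y₀ = 0 := hwin0 x₀ y₀ hGx₀.ne
              (hdistlt x₀ y₀ hGx₀ (by omega))
            have h1 : A y₀ x₀ = 0 := by rw [hsymm.apply]; exact hA0
            have h2 : A y₀ w₁ = 0 := by rw [hsymm.apply]; exact h.symm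
            have : w₁ = x₀ := hrow y₀ w₁ x₀ hne12 hGx₀.ne h2 h1
            rw [this] at hσw₁
            omega
        exact ⟨pathOf σ₁, isPathGraph_pathOf σ₁,
          FA_strict A hsymm hnn (fun i j => dist_mono hP₁le hP₁conn i j) hne12 hstrict hA12⟩
  · have hnm : ¬ ∀ H' : SimpleGraph (Fin n), H'.Connected → FA A H' ≤ FA A T :=
      fun HM => hTσ (tree_max_path A hTc hTa hsymm hnn hrow HM)
    push_neg at hnm
    obtain ⟨H', hH'c, hlt⟩ := hnm
    exact ⟨Tm, hTmPath, lt_of_le_of_lt hFAG (lt_of_lt_of_le hlt (HMAXs H' hH'c))⟩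
end

section
/- Let G be a tree of order n where vertex n has degree 1 with neighbor k, and let A be a nonnegative symmetric n×n matrix. Define the (n−1)×(n−1) matrix A' by a'_{i,j} = a_{i,j} if i,j ≠ k, a'_{k,j} = a_{k,j} + a_{n,j}, and a'_{i,k} = a_{i,k} + a_{i,n}. Then F_A(G) = Σ_{j=1}^{n−1} a_{j,n} + F_{A'}(G−n). -/
open SimpleGraph Finset

/-! Deleting the pendant vertex `n` changes no distance between the remaining vertices, because
a shortest walk never passes through a vertex of degree one, and `d(i, n) = d(i, k) + 1`. Hence
`F_A(G)` is the sum over pairs inside `G - n` plus `∑ᵢ (d(i, k) + 1) a_{i,n}`. On the other side,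
`A'` is the restriction of `A` plus the symmetric matrix carrying the column `(a_{i,n})ᵢ` in row
and column `k`; `F` is additive in the matrix, and that second summand contributes
`∑ᵢ d(i, k) a_{i,n}`. -/

namespace SimpleGraph

variable {V W : Type*} {G : SimpleGraph V} {x : V}

theorem Walk.exists_length_le_notMem_support_tail (hx : (G.neighborSet x).Subsingleton) :
    ∀ {u v : V} (p : G.Walk u v), v ≠ x →
      ∃ q : G.Walk u v, q.length ≤ p.length ∧ x ∉ q.support.tail
  | _, _, .nil, _ => ⟨.nil, le_rfl, by simp⟩
  | _, _, .cons (v := w) huw p, hv => by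
    obtain ⟨q, hq, hxq⟩ := exists_length_le_notMem_support_tail hx p hv
    by_cases hw : w = x
    · subst hw
      cases q with
      | nil => exact absurd rfl hv
      | cons hwy r =>
        -- a walk entering the pendant vertex `w` must step back to `u`, so cut out the detour
        obtain rfl := hx huw.symm hwy
        rw [Walk.support_cons, List.tail_cons] at hxq
        exact ⟨r, by simp only [Walk.length_cons] at hq ⊢; omega,
          fun h => hxq (List.mem_of_mem_tail h)⟩
    · refine ⟨.cons huw q, by simpa using hq, ?_⟩
      rw [Walk.support_cons, List.tail_cons, ← Walk.cons_tail_support, List.mem_cons, not_or]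
      exact ⟨Ne.symm hw, hxq⟩

theorem Walk.exists_comap_of_support_subset_range {f : W → V} (hf : f.Injective) {u v : V}
    (p : G.Walk u v) {a b : W} (ha : f a = u) (hb : f b = v)
    (hp : ∀ w ∈ p.support, w ∈ Set.range f) :
    ∃ q : (G.comap f).Walk a b, q.length = p.length := by
  induction p generalizing a with
  | nil =>
    obtain rfl := hf (ha.trans hb.symm)
    exact ⟨.nil, rfl⟩
  | @cons u w v huw p ih =>
    obtain ⟨c, rfl⟩ := hp w (by simp)
    obtain ⟨q, hq⟩ := ih rfl hb fun w hw => hp w (by simp [hw])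
    subst ha
    have hac : (G.comap f).Adj a c := huw
    exact ⟨.cons hac q, by rw [Walk.length_cons, hq, Walk.length_cons]⟩

theorem dist_comap_of_neighborSet_subsingleton {f : W → V} (hf : f.Injective)
    (hrange : Set.range f = {x}ᶜ) (hx : (G.neighborSet x).Subsingleton) (a b : W) :
    (G.comap f).dist a b = G.dist (f a) (f b) := by
  have hfx : ∀ c, f c ≠ x := fun c => by
    simpa [hrange] using Set.mem_range_self (f := f) c
  by_cases hr : G.Reachable (f a) (f b)
  · obtain ⟨p, hp⟩ := hr.exists_walk_length_eq_dist
    obtain ⟨q, hqp, hxq⟩ := p.exists_length_le_notMem_support_tail hx (hfx b)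
    have hsupp : ∀ w ∈ q.support, w ∈ Set.range f := by
      rw [← Walk.cons_tail_support, hrange]
      rintro w (_ | ⟨_, hw⟩)
      exacts [hfx a, fun h => hxq (h ▸ hw)]
    obtain ⟨q', hq'⟩ := q.exists_comap_of_support_subset_range hf rfl rfl hsupp
    obtain ⟨r, hr'⟩ := q'.reachable.exists_walk_length_eq_dist
    refine le_antisymm ((dist_le q').trans (by omega)) ?_
    simpa [hr'] using dist_le (r.map (Hom.comap f G))
  · rw [dist_eq_zero_of_not_reachable hr, dist_eq_zero_of_not_reachable]
    exact fun ⟨q⟩ => hr ⟨q.map (Hom.comap f G)⟩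

theorem Connected.dist_eq_dist_add_one_of_neighborSet_subsingleton (hG : G.Connected) {y u : V}
    (hadj : G.Adj x y) (hx : (G.neighborSet x).Subsingleton) (hu : u ≠ x) :
    G.dist u x = G.dist u y + 1 := by
  obtain ⟨p, hp⟩ := hG.exists_walk_length_eq_dist x u
  obtain ⟨z, hxz, r, rfl⟩ := p.exists_eq_cons_of_ne hu.symm
  obtain rfl := hx hxz hadj
  have hyx : G.dist z x = 1 := dist_eq_one_iff_adj.mpr hadj.symm
  have hle := hG.dist_triangle (u := u) (v := z) (w := x)
  have hge := dist_le r
  rw [Walk.length_cons] at hp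
  rw [dist_comm (u := u) (v := x), dist_comm (u := u) (v := z)] at hle ⊢
  omega

end SimpleGraph

section FA

variable {n : ℕ}

theorem FA_add (A B : Matrix (Fin n) (Fin n) ℝ) (H : SimpleGraph (Fin n)) :
    FA (A + B) H = FA A H + FA B H := by
  simp only [FA, ← Finset.sum_add_distrib, Matrix.add_apply]
  refine Finset.sum_congr rfl fun i _ => Finset.sum_congr rfl fun j _ => ?_
  split_ifs <;> ring

theorem FA_updateRow_updateCol_zero (k : Fin n) (c : Fin n → ℝ) (H : SimpleGraph (Fin n)) :
    FA (((0 : Matrix (Fin n) (Fin n) ℝ).updateCol k c).updateRow k c) H =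
      ∑ j, (H.dist j k : ℝ) * c j := by
  have hterm : ∀ i j : Fin n,
      (if i < j then
        (H.dist i j : ℝ) * ((0 : Matrix (Fin n) (Fin n) ℝ).updateCol k c).updateRow k c i j
      else 0) =
      (if i = k then (if k < j then (H.dist j k : ℝ) * c j else 0) else 0) +
        (if j = k then (if i < k then (H.dist i k : ℝ) * c i else 0) else 0) := by
    intro i j
    simp only [Matrix.updateRow_apply, Matrix.updateCol_apply, Matrix.zero_apply]
    by_cases hi : i = k <;> by_cases hj : j = k <;> simp [hi, hj, dist_comm]
  have hsplit : ∀ j : Fin n, (H.dist j k : ℝ) * c j =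
      (if k < j then (H.dist j k : ℝ) * c j else 0) +
        (if j < k then (H.dist j k : ℝ) * c j else 0) := by
    intro j
    rcases lt_trichotomy j k with h | rfl | h
    · simp [h, h.not_gt]
    · simp
    · simp [h, h.not_gt]
  simp only [FA, hterm, Finset.sum_add_distrib, Finset.sum_ite_irrel, Finset.sum_ite_eq',
    Finset.mem_univ, if_true, Finset.sum_const_zero]
  rw [← Finset.sum_add_distrib]
  exact Finset.sum_congr rfl fun j _ => (hsplit j).symm

theorem FA_eq_sum_castSucc (A : Matrix (Fin (n + 1)) (Fin (n + 1)) ℝ)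
    (H : SimpleGraph (Fin (n + 1))) :
    FA A H = (∑ i : Fin n, ∑ j : Fin n,
        if i < j then (H.dist i.castSucc j.castSucc : ℝ) * A i.castSucc j.castSucc else 0) +
      ∑ i : Fin n, (H.dist i.castSucc (Fin.last n) : ℝ) * A i.castSucc (Fin.last n) := by
  simp [FA, Fin.sum_univ_castSucc, Finset.sum_add_distrib, not_lt.mpr (Fin.le_last _)]

end FA

theorem stmt_13_general {n : ℕ} (G : SimpleGraph (Fin (n + 1))) (hG : G.IsTree)
    (k : Fin n) (hadj : G.Adj (Fin.last n) k.castSucc)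
    (huniq : ∀ j : Fin (n + 1), G.Adj (Fin.last n) j → j = k.castSucc)
    (A : Matrix (Fin (n + 1)) (Fin (n + 1)) ℝ) (hsymm : A.IsSymm)
    (A' : Matrix (Fin n) (Fin n) ℝ)
    (hA' : ∀ i j : Fin n, A' i j =
      if i = k then A k.castSucc j.castSucc + A (Fin.last n) j.castSucc
      else if j = k then A i.castSucc k.castSucc + A i.castSucc (Fin.last n)
      else A i.castSucc j.castSucc) :
    FA A G = (∑ j : Fin n, A j.castSucc (Fin.last n)) +
      FA A' (SimpleGraph.comap Fin.castSucc G) := by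
  set G' := G.comap Fin.castSucc
  set c : Fin n → ℝ := fun j => A j.castSucc (Fin.last n)
  have hx : (G.neighborSet (Fin.last n)).Subsingleton := fun y hy z hz =>
    (huniq y hy).trans (huniq z hz).symm
  have hrange : Set.range Fin.castSucc = {Fin.last n}ᶜ := by
    ext x
    rw [Set.mem_range, Set.mem_compl_singleton_iff]
    exact Fin.exists_castSucc_eq
  have hdist (i j : Fin n) : G.dist i.castSucc j.castSucc = G'.dist i j :=
    (dist_comap_of_neighborSet_subsingleton (Fin.castSucc_injective n) hrange hx i j).symm
  have hpendant (i : Fin n) : G.dist i.castSucc (Fin.last n) = G'.dist i k + 1 := by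
    rw [hG.connected.dist_eq_dist_add_one_of_neighborSet_subsingleton hadj hx
      (Fin.castSucc_lt_last i).ne, hdist]
  have hA'_eq : A' = A.submatrix Fin.castSucc Fin.castSucc +
      ((0 : Matrix (Fin n) (Fin n) ℝ).updateCol k c).updateRow k c := by
    ext i j
    rw [hA', hsymm.apply j.castSucc (Fin.last n)]
    by_cases hi : i = k <;> by_cases hj : j = k <;>
      simp [hi, hj, c, Matrix.updateRow_apply]
  rw [FA_eq_sum_castSucc, hA'_eq, FA_add, FA_updateRow_updateCol_zero]
  simp only [FA, hdist, hpendant, Matrix.submatrix_apply, c]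
  push_cast
  simp only [add_mul, one_mul, Finset.sum_add_distrib]
  ring

theorem stmt_13 {n : ℕ} (G : SimpleGraph (Fin (n + 1))) (hG : G.IsTree)
    (k : Fin n) (hadj : G.Adj (Fin.last n) k.castSucc)
    (huniq : ∀ j : Fin (n + 1), G.Adj (Fin.last n) j → j = k.castSucc)
    (A : Matrix (Fin (n + 1)) (Fin (n + 1)) ℝ) (hsymm : A.IsSymm)
    (hnn : ∀ i j, 0 ≤ A i j)
    (A' : Matrix (Fin n) (Fin n) ℝ)
    (hA' : ∀ i j : Fin n, A' i j =
      if i = k then A k.castSucc j.castSucc + A (Fin.last n) j.castSucc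
      else if j = k then A i.castSucc k.castSucc + A i.castSucc (Fin.last n)
      else A i.castSucc j.castSucc) :
    FA A G = (∑ j : Fin n, A j.castSucc (Fin.last n)) +
      FA A' (SimpleGraph.comap Fin.castSucc G) :=
  stmt_13_general G hG k hadj huniq A hsymm A' hA'
end

section
/- Let A be a nonnegative symmetric n×n matrix such that each row has at most one zero off-diagonal entry, and suppose n ≥ 3. If G is the cycle C_n, then there exists a path P with V(P) = V(G) such that F_A(C_n) < F_A(P). -/
open SimpleGraph Finset

/-!
Deleting from `C_n` an edge `{x, y}` with `a_{x,y} > 0` leaves a Hamiltonian path `P ⊆ C_n`.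
Distances can only grow when edges are removed, and `d_P(x, y) ≥ 2 > 1 = d_{C_n}(x, y)`, so
`F_A(P) > F_A(C_n)`. Such an edge exists at every vertex: of its two neighbours on the cycle, at most
one carries a zero entry of `A`.
-/

lemma FA_lt_FA_of_dist_le {n : ℕ} {A : Matrix (Fin n) (Fin n) ℝ} {G H : SimpleGraph (Fin n)}
    (hnn : ∀ i j, 0 ≤ A i j) (hdist : ∀ i j, G.dist i j ≤ H.dist i j) {x y : Fin n}
    (hxy : x < y) (hA : 0 < A x y) (hlt : G.dist x y < H.dist x y) : FA A G < FA A H := by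
  have hterm : ∀ i j, (if i < j then (G.dist i j : ℝ) * A i j else 0) ≤
      (if i < j then (H.dist i j : ℝ) * A i j else 0) := by
    intro i j
    split_ifs
    · exact mul_le_mul_of_nonneg_right (by exact_mod_cast hdist i j) (hnn i j)
    · rfl
  refine sum_lt_sum (fun i _ ↦ sum_le_sum fun j _ ↦ hterm i j) ⟨x, mem_univ x, ?_⟩
  refine sum_lt_sum (fun j _ ↦ hterm x j) ⟨y, mem_univ y, ?_⟩
  simp only [if_pos hxy]
  gcongr

lemma IsPathGraph.connected {n : ℕ} [NeZero n] {G : SimpleGraph (Fin n)} (hG : IsPathGraph G) :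
    G.Connected := by
  obtain ⟨e⟩ := hG
  obtain ⟨k, rfl⟩ := Nat.exists_eq_succ_of_ne_zero (NeZero.ne n)
  exact e.connected_iff.mpr (pathGraph_connected k)

lemma exists_isPathGraph_le_cycleGraph_not_adj {n : ℕ} (hn : 3 ≤ n) {x y : Fin n}
    (hxy : (cycleGraph n).Adj x y) :
    ∃ P : SimpleGraph (Fin n), IsPathGraph P ∧ P ≤ cycleGraph n ∧ ¬ P.Adj x y := by
  obtain ⟨m, rfl⟩ : ∃ m, n = m + 3 := ⟨n - 3, by omega⟩
  wlog h : y - x = 1 generalizing x y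
  · obtain ⟨P, hP, hle, hnadj⟩ := this hxy.symm ((cycleGraph_adj.mp hxy).resolve_right h)
    exact ⟨P, hP, hle, fun hadj ↦ hnadj hadj.symm⟩
  -- the path `y, y + 1, …, y - 1 = x`: `pathGraph` translated by `y`
  refine ⟨(pathGraph (m + 3)).comap (Equiv.subRight y), ⟨Iso.comap _ _⟩, ?_, ?_⟩
  · intro a b hab
    have := pathGraph_le_cycleGraph hab
    simpa only [cycleGraph_adj, Equiv.subRight_apply, sub_sub_sub_cancel_right] using this
  · have hx : x - y = -1 := by rw [← neg_sub, h]
    simp only [comap_adj, Equiv.subRight_apply, sub_self, hx, pathGraph_adj, Fin.coe_neg_one,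
      Fin.val_zero]
    omega

lemma exists_cycleGraph_adj_ne_zero {n : ℕ} (hn : 3 ≤ n) (A : Matrix (Fin n) (Fin n) ℝ)
    (hrow : ∀ i j₁ j₂ : Fin n, j₁ ≠ i → j₂ ≠ i → A i j₁ = 0 → A i j₂ = 0 → j₁ = j₂)
    (v : Fin n) : ∃ w, (cycleGraph n).Adj v w ∧ A v w ≠ 0 := by
  obtain ⟨m, rfl⟩ : ∃ m, n = m + 3 := ⟨n - 3, by omega⟩
  have hadj : ∀ w ∈ ({v - 1, v + 1} : Finset _), (cycleGraph (m + 3)).Adj v w := fun w hw ↦ by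
    rwa [← mem_neighborFinset, cycleGraph_neighborFinset]
  have hne : v - 1 ≠ v + 1 :=
    card_pair_eq_two_iff.mp (cycleGraph_degree_two_le.symm.trans cycleGraph_degree_three_le)
  by_contra! hzero
  have hprev := hadj (v - 1) (by simp)
  have hnext := hadj (v + 1) (by simp)
  exact hne (hrow v _ _ hprev.ne' hnext.ne' (hzero _ hprev) (hzero _ hnext))

theorem stmt_14_general {n : ℕ} (hn : 3 ≤ n)
    (A : Matrix (Fin n) (Fin n) ℝ) (hnn : ∀ i j, 0 ≤ A i j)
    (hrow : ∀ i j₁ j₂ : Fin n, j₁ ≠ i → j₂ ≠ i → A i j₁ = 0 → A i j₂ = 0 → j₁ = j₂) :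
    ∃ P : SimpleGraph (Fin n), IsPathGraph P ∧
      FA A (SimpleGraph.cycleGraph n) < FA A P := by
  have : NeZero n := ⟨by omega⟩
  obtain ⟨y, hadj, hA⟩ := exists_cycleGraph_adj_ne_zero hn A hrow 0
  obtain ⟨P, hP, hle, hnadj⟩ := exists_isPathGraph_le_cycleGraph_not_adj hn hadj
  have hconn := hP.connected
  refine ⟨P, hP, FA_lt_FA_of_dist_le hnn (fun i j ↦ (hconn i j).dist_anti hle)
    (Fin.pos_iff_ne_zero.mpr hadj.ne') ((hnn 0 y).lt_of_ne' hA) ?_⟩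
  rw [dist_eq_one_iff_adj.mpr hadj]
  exact hconn.one_lt_dist_of_ne_of_not_adj hadj.ne hnadj

theorem stmt_14 {n : ℕ} (hn : 3 ≤ n)
    (A : Matrix (Fin n) (Fin n) ℝ) (hsymm : A.IsSymm) (hnn : ∀ i j, 0 ≤ A i j)
    (hrow : ∀ i j₁ j₂ : Fin n, j₁ ≠ i → j₂ ≠ i → A i j₁ = 0 → A i j₂ = 0 → j₁ = j₂) :
    ∃ P : SimpleGraph (Fin n), IsPathGraph P ∧
      FA A (SimpleGraph.cycleGraph n) < FA A P :=
  stmt_14_general hn A hnn hrow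
end

section
/- Let P be the path 1−2−⋯−(n−1), let 1 < k < n−1, and let T be the tree obtained by attaching vertex n to vertex k. Let A be a nonnegative symmetric n×n matrix. Let T_1 be the path obtained from T by deleting edge {n,k} and adding edge {n,1}, and T_2 the path obtained by deleting {n,k} and adding {n,n−1}. If F_A(T_1) ≤ F_A(T) and F_A(T_2) ≤ F_A(T), then a_{1,n} + ⋯ + a_{k−1,n} = a_{k,n} + ⋯ + a_{n−1,n} and F_A(T_1) = F_A(T) = F_A(T_2). -/
open SimpleGraph Finset

/-- The tree obtained from the path on vertices `0, 1, …, n-2` (paper's `1, …, n-1`)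
by attaching the last vertex `n-1` (paper's `n`) to the vertex `m`. -/
def attachTree (n : ℕ) (m : Fin n) : SimpleGraph (Fin n) :=
  SimpleGraph.fromRel fun u v =>
    (u.val + 1 = v.val ∧ v.val < n - 1) ∨ (u.val = n - 1 ∧ v = m)

/-!
Distances between path vertices are the same in every tree `attachTree n m`, and the pendant
vertex is at distance `|i - m| + 1` from the path vertex `i`; both lower bounds come from
potentials that change by at most one along edges. Hence
`F_A(T_m) - F_A(T_k) = ∑ᵢ (|i - m| - |i - k|) a_{i,n}`, and the pointwise bound
`|i - m| - |i - k| ≥ ±(k - m)` (sign `+` exactly when `k ≤ i`) gives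
`F_A(T_m) - F_A(T_k) ≥ (k - m) (S₂ - S₁)`, where `S₁` and `S₂` are the weights of the pendant
vertex to the path vertices before `k` and from `k` on. Taking `m = 0` and `m = n - 2` forces
`S₂ ≤ S₁ ≤ S₂`, after which both differences are nonnegative.
-/

namespace SimpleGraph

variable {V : Type*} {G : SimpleGraph V} {f : V → ℝ}

theorem Walk.abs_sub_le_length (hf : ∀ u v, G.Adj u v → |f u - f v| ≤ 1) {u v : V}
    (p : G.Walk u v) : |f u - f v| ≤ p.length := by
  induction p with
  | nil => simp
  | @cons a b c hab p ih =>
    calc |f a - f c| ≤ |f a - f b| + |f b - f c| := abs_sub_le _ _ _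
      _ ≤ 1 + p.length := add_le_add (hf a b hab) ih
      _ = (cons hab p).length := by push_cast [Walk.length_cons]; ring

theorem Reachable.abs_sub_le_dist (hf : ∀ u v, G.Adj u v → |f u - f v| ≤ 1) {u v : V}
    (hr : G.Reachable u v) : |f u - f v| ≤ G.dist u v := by
  obtain ⟨p, hp⟩ := hr.exists_walk_length_eq_dist
  exact hp ▸ p.abs_sub_le_length hf

end SimpleGraph

theorem ite_sub_le_abs_sub_sub_abs_sub {α : Type*} [AddCommGroup α] [LinearOrder α]
    [IsOrderedAddMonoid α] (x m k : α) :
    (if k ≤ x then k - m else m - k) ≤ |x - m| - |x - k| := by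
  split_ifs with hkx
  · rw [abs_of_nonneg (sub_nonneg.2 hkx)]
    calc k - m = (x - m) - (x - k) := by abel
      _ ≤ |x - m| - (x - k) := sub_le_sub_right (le_abs_self _) _
  · rw [abs_of_neg (sub_neg.2 (lt_of_not_ge hkx))]
    calc m - k = -(x - m) - -(x - k) := by abel
      _ ≤ |x - m| - -(x - k) := sub_le_sub_right (neg_le_abs _) _

section attachTree

variable {n : ℕ} {m : Fin n}

theorem attachTree_adj {u v : Fin n} :
    (attachTree n m).Adj u v ↔ u ≠ v ∧
      ((u.val + 1 = v.val ∧ v.val < n - 1) ∨ (v.val + 1 = u.val ∧ u.val < n - 1) ∨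
        (u.val = n - 1 ∧ v = m) ∨ (v.val = n - 1 ∧ u = m)) := by
  simp only [attachTree, SimpleGraph.fromRel_adj]
  tauto

theorem attachTree_abs_sub_le_one {g : ℕ → ℝ} {c : ℝ} (hg : ∀ i, |g i - g (i + 1)| ≤ 1)
    (hc : |c - g m| ≤ 1) {u v : Fin n} (huv : (attachTree n m).Adj u v) :
    |(if u.val = n - 1 then c else g u) - (if v.val = n - 1 then c else g v)| ≤ 1 := by
  obtain ⟨hne, ⟨h, hv⟩ | ⟨h, hu⟩ | ⟨hu, rfl⟩ | ⟨hv, rfl⟩⟩ :=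
    attachTree_adj.1 huv
  · rw [if_neg (by omega), if_neg (by omega), ← h]
    exact hg _
  · rw [if_neg (by omega), if_neg (by omega), ← h, abs_sub_comm]
    exact hg _
  · rw [if_pos hu, if_neg fun hv => hne (Fin.ext (hu.trans hv.symm))]
    exact hc
  · rw [if_neg fun hu => hne (Fin.ext (hu.trans hv.symm)), if_pos hv, abs_sub_comm]
    exact hc

theorem attachTree_exists_walk_of_le {a b : Fin n} (hab : a ≤ b) (hb : b.val < n - 1) :
    ∃ p : (attachTree n m).Walk a b, p.length = b.val - a.val := by
  obtain ⟨d, hd⟩ := Nat.exists_eq_add_of_le (Fin.le_def.1 hab)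
  induction d generalizing b with
  | zero => exact ⟨Walk.nil.copy rfl (Fin.ext hd.symm), by simp [hd]⟩
  | succ d ih =>
    let b' : Fin n := ⟨a.val + d, by omega⟩
    have hadj : (attachTree n m).Adj b' b := attachTree_adj.2
      ⟨fun h => by simp [b', Fin.ext_iff] at h; omega, Or.inl ⟨by simp [b']; omega, hb⟩⟩
    obtain ⟨p, hp⟩ := ih (b := b') (Fin.le_def.2 (by simp [b'])) (by simp [b']; omega) rfl
    exact ⟨p.concat hadj, by simp [hp, b']; omega⟩

theorem attachTree_exists_walk {a b : Fin n} (ha : a.val < n - 1) (hb : b.val < n - 1) :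
    ∃ p : (attachTree n m).Walk a b, p.length = ((a.val : ℤ) - b.val).natAbs := by
  rcases le_total a b with hab | hba
  · obtain ⟨p, hp⟩ := attachTree_exists_walk_of_le (m := m) hab hb
    exact ⟨p, by rw [hp]; have := Fin.le_def.1 hab; omega⟩
  · obtain ⟨p, hp⟩ := attachTree_exists_walk_of_le (m := m) hba ha
    exact ⟨p.reverse, by rw [Walk.length_reverse, hp]; have := Fin.le_def.1 hba; omega⟩

theorem attachTree_dist_of_lt {i j : Fin n} (hi : i.val < n - 1) (hj : j.val < n - 1) :
    ((attachTree n m).dist i j : ℝ) = |(i.val : ℝ) - j.val| := by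
  obtain ⟨p, hp⟩ := attachTree_exists_walk (m := m) hi hj
  have hcast : |(i.val : ℝ) - j.val| = (p.length : ℝ) := by
    rw [hp, Nat.cast_natAbs]; push_cast; rfl
  refine le_antisymm (hcast ▸ by exact_mod_cast SimpleGraph.dist_le p) ?_
  have := p.reachable.abs_sub_le_dist fun u v huv =>
    attachTree_abs_sub_le_one (g := Nat.cast) (c := m.val)
      (fun i => by push_cast; simp) (by simp) huv
  simpa [hi.ne, hj.ne] using this

theorem attachTree_dist_last {i last : Fin n} (hm : m.val < n - 1) (hi : i.val < n - 1)
    (hlast : last.val = n - 1) :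
    ((attachTree n m).dist i last : ℝ) = |(i.val : ℝ) - m.val| + 1 := by
  obtain ⟨p, hp⟩ := attachTree_exists_walk (m := m) hi hm
  have hadj : (attachTree n m).Adj m last :=
    attachTree_adj.2 ⟨Fin.ne_of_val_ne (by omega), Or.inr (Or.inr (Or.inr ⟨hlast, rfl⟩))⟩
  have hcast : |(i.val : ℝ) - m.val| + 1 = ((p.concat hadj).length : ℝ) := by
    rw [Walk.length_concat, hp, Nat.cast_add, Nat.cast_natAbs]; push_cast; rfl
  refine le_antisymm (hcast ▸ by exact_mod_cast SimpleGraph.dist_le (p.concat hadj)) ?_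
  have hg : ∀ x : ℕ, |(|(x : ℝ) - m.val| - |((x + 1 : ℕ) : ℝ) - m.val|)| ≤ 1 := fun x =>
    (abs_abs_sub_abs_le_abs_sub _ _).trans (by push_cast; simp)
  have := (p.concat hadj).reachable.abs_sub_le_dist fun u v huv =>
    attachTree_abs_sub_le_one (g := fun x : ℕ => |(x : ℝ) - m.val|) (c := -1) hg (by simp) huv
  simp only [if_neg hi.ne, if_pos hlast] at this
  rwa [sub_neg_eq_add, abs_of_nonneg (by positivity)] at this

end attachTree

theorem FA_sub_FA_of_dist_eq {n : ℕ} (A : Matrix (Fin n) (Fin n) ℝ) {G H : SimpleGraph (Fin n)}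
    (v : Fin n) (h : ∀ i j, i < j → j ≠ v → G.dist i j = H.dist i j) :
    FA A G - FA A H = ∑ i, if i < v then ((G.dist i v : ℝ) - H.dist i v) * A i v else 0 := by
  unfold FA
  rw [← Finset.sum_sub_distrib]
  refine Finset.sum_congr rfl fun i _ => ?_
  rw [← Finset.sum_sub_distrib, Finset.sum_eq_single v]
  · split_ifs <;> ring
  · intro j _ hj
    split_ifs with hij
    · rw [h i j hij hj, sub_self]
    · exact sub_self 0
  · simp

theorem le_FA_attachTree_sub {n : ℕ} (A : Matrix (Fin n) (Fin n) ℝ) {m k last : Fin n}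
    (hm : m.val < n - 1) (hk : k.val < n - 1) (hlast : last.val = n - 1)
    (hA : ∀ i, 0 ≤ A i last) :
    ((k.val : ℝ) - m.val) *
        ((∑ i : Fin n, if k.val ≤ i.val ∧ i.val < n - 1 then A i last else 0) -
          ∑ i : Fin n, if i.val < k.val then A i last else 0) ≤
      FA A (attachTree n m) - FA A (attachTree n k) := by
  have hpath : ∀ i j : Fin n, i < j → j ≠ last →
      (attachTree n m).dist i j = (attachTree n k).dist i j := by
    intro i j hij hj
    have hj' : j.val < n - 1 := by
      have := j.isLt; have := Fin.val_ne_of_ne hj; omega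
    have hi' : i.val < n - 1 := (Fin.lt_def.1 hij).trans hj'
    exact_mod_cast (attachTree_dist_of_lt hi' hj').trans (attachTree_dist_of_lt hi' hj').symm
  rw [FA_sub_FA_of_dist_eq A last hpath, mul_sub, Finset.mul_sum, Finset.mul_sum,
    ← Finset.sum_sub_distrib]
  refine Finset.sum_le_sum fun i _ => ?_
  by_cases hi : i.val < n - 1
  · have key := ite_sub_le_abs_sub_sub_abs_sub (i.val : ℝ) m.val k.val
    have hterm := mul_le_mul_of_nonneg_right key (hA i)
    rw [if_pos (Fin.lt_def.2 (hlast ▸ hi)), attachTree_dist_last hm hi hlast,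
      attachTree_dist_last hk hi hlast]
    rcases le_or_gt k.val i.val with hki | hik
    · rw [if_pos (by exact_mod_cast hki)] at hterm
      simp only [hki, hi, and_self, if_true, if_neg (not_lt.2 hki)]
      linarith
    · rw [if_neg (by exact_mod_cast hik.not_ge)] at hterm
      simp only [hik.not_ge, false_and, if_false, hik, if_true]
      linarith
  · have hlt : ¬i < last := fun h => hi (hlast ▸ Fin.lt_def.1 h)
    simp [hi, hlt, show ¬i.val < k.val by omega]

theorem stmt_17_general {n : ℕ} (k : Fin n) (hk0 : 0 < k.val) (hk1 : k.val < n - 2)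
    (A : Matrix (Fin n) (Fin n) ℝ) (hnn : ∀ i j, 0 ≤ A i j)
    (lastv : Fin n) (hlast : lastv.val = n - 1)
    (zerov : Fin n) (hzero : zerov.val = 0)
    (prev : Fin n) (hprev : prev.val = n - 2) :
    FA A (attachTree n zerov) ≤ FA A (attachTree n k) →
    FA A (attachTree n prev) ≤ FA A (attachTree n k) →
    ((∑ i : Fin n, if i.val < k.val then A i lastv else 0) =
        (∑ i : Fin n, if k.val ≤ i.val ∧ i.val < n - 1 then A i lastv else 0) ∧
      FA A (attachTree n zerov) = FA A (attachTree n k) ∧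
      FA A (attachTree n prev) = FA A (attachTree n k)) := by
  intro hzero_le hprev_le
  have hk : k.val < n - 1 := by omega
  have hzero_ge := le_FA_attachTree_sub A (m := zerov) (by omega) hk hlast (hnn · lastv)
  have hprev_ge := le_FA_attachTree_sub A (m := prev) (by omega) hk hlast (hnn · lastv)
  set S₁ := ∑ i : Fin n, if i.val < k.val then A i lastv else 0
  set S₂ := ∑ i : Fin n, if k.val ≤ i.val ∧ i.val < n - 1 then A i lastv else 0
  have hk_pos : (0 : ℝ) < k.val := by exact_mod_cast hk0
  have hk_lt : (k.val : ℝ) < prev.val := by exact_mod_cast (show k.val < prev.val by omega)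
  rw [hzero, Nat.cast_zero, sub_zero] at hzero_ge
  have hS₂_le : S₂ ≤ S₁ := by nlinarith
  have hS₁_le : S₁ ≤ S₂ := by nlinarith
  have hS : S₁ = S₂ := le_antisymm hS₁_le hS₂_le
  rw [hS, sub_self, mul_zero] at hzero_ge hprev_ge
  exact ⟨hS, by linarith, by linarith⟩

theorem stmt_17 {n : ℕ} (k : Fin n) (hk0 : 0 < k.val) (hk1 : k.val < n - 2)
    (A : Matrix (Fin n) (Fin n) ℝ) (hsymm : A.IsSymm) (hnn : ∀ i j, 0 ≤ A i j)
    (lastv : Fin n) (hlast : lastv.val = n - 1)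
    (zerov : Fin n) (hzero : zerov.val = 0)
    (prev : Fin n) (hprev : prev.val = n - 2) :
    FA A (attachTree n zerov) ≤ FA A (attachTree n k) →
    FA A (attachTree n prev) ≤ FA A (attachTree n k) →
    ((∑ i : Fin n, if i.val < k.val then A i lastv else 0) =
        (∑ i : Fin n, if k.val ≤ i.val ∧ i.val < n - 1 then A i lastv else 0) ∧
      FA A (attachTree n zerov) = FA A (attachTree n k) ∧
      FA A (attachTree n prev) = FA A (attachTree n k)) :=
  stmt_17_general k hk0 hk1 A hnn lastv hlast zerov hzero prev hprev
end
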